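/- arXiv:1208.1165 — 8 statements merged into one kernel-verified Lean document; each statement's English description precedes it below -/
import Mathlib

section
/- The implicit Euler scheme y₀ⁿ = y₀ > 0, y_{k+1}ⁿ = y_kⁿ + (a(1-β)T/n)(y_{k+1}ⁿ)^{-γ} e^{b t_{k+1}ⁿ} + w̃_{t_{k+1}ⁿ} - w̃_{t_kⁿ} admits a unique solution, and y_kⁿ > 0 for all n ∈ ℕ* and k = 0,…,n. -/
open Real


lemma key_root (c γ : ℝ) (hc : 0 < c) (hγ : 0 < γ) (r : ℝ) :
    ∃! x : ℝ, 0 < x ∧ x = r + c * x ^ (-γ) := by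
  set f : ℝ → ℝ := fun x => x - c * x ^ (-γ) with hf
  have hmono : StrictMonoOn f (Set.Ioi 0) := by
    intro x hx y hy hxy
    have hx0 : (0:ℝ) < x := hx
    have hy0 : (0:ℝ) < y := hy
    have h1 : y ^ (-γ) ≤ x ^ (-γ) := by
      rw [Real.rpow_neg hx0.le, Real.rpow_neg hy0.le]
      have h2 : x ^ γ ≤ y ^ γ := Real.rpow_le_rpow hx0.le hxy.le hγ.le
      exact inv_anti₀ (Real.rpow_pos_of_pos hx0 γ) h2
    have := mul_le_mul_of_nonneg_left h1 hc.le
    simp only [hf]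
    linarith
  set d : ℝ := c / (1 + |r|) with hd
  have hdpos : 0 < d := div_pos hc (by positivity)
  set x₀ : ℝ := min 1 (d ^ (1/γ)) with hx₀
  set x₁ : ℝ := max 1 (r + c) with hx₁
  have h0pos : 0 < x₀ := lt_min one_pos (Real.rpow_pos_of_pos hdpos _)
  have hx01 : x₀ ≤ x₁ := le_trans (min_le_left _ _) (le_max_left _ _)
  have hpow : x₀ ^ γ ≤ d := by
    have h1 : x₀ ^ γ ≤ (d ^ (1/γ)) ^ γ :=
      Real.rpow_le_rpow h0pos.le (min_le_right _ _) hγ.le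
    rwa [← Real.rpow_mul hdpos.le, one_div_mul_cancel hγ.ne', Real.rpow_one] at h1
  have hf0 : f x₀ ≤ r := by
    have h1 : d⁻¹ ≤ (x₀ ^ γ)⁻¹ := inv_anti₀ (Real.rpow_pos_of_pos h0pos γ) hpow
    have h2 : (1 + |r|) ≤ c * (x₀ ^ γ)⁻¹ := by
      have := mul_le_mul_of_nonneg_left h1 hc.le
      have heq : c * d⁻¹ = 1 + |r| := by
        rw [hd]; field_simp
      linarith
    have h3 : x₀ ^ (-γ) = (x₀ ^ γ)⁻¹ := Real.rpow_neg h0pos.le γ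
    have h4 : x₀ ≤ 1 := min_le_left _ _
    have h5 : -|r| ≤ r := neg_abs_le r
    simp only [hf, h3]
    linarith
  have hf1 : r ≤ f x₁ := by
    have h1 : x₁ ^ (-γ) ≤ 1 :=
      Real.rpow_le_one_of_one_le_of_nonpos (le_max_left _ _) (neg_nonpos.mpr hγ.le)
    have h2 : c * x₁ ^ (-γ) ≤ c := by
      have := mul_le_mul_of_nonneg_left h1 hc.le
      simpa using this
    have h3 : r + c ≤ x₁ := le_max_right _ _
    simp only [hf]
    linarith
  have hcont : ContinuousOn f (Set.Icc x₀ x₁) := by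
    intro x hx
    have hxpos : (0:ℝ) < x := lt_of_lt_of_le h0pos hx.1
    exact ((continuousAt_id.sub
      (continuousAt_const.mul (Real.continuousAt_rpow_const x (-γ)
        (Or.inl hxpos.ne')))).continuousWithinAt)
  obtain ⟨x, hxmem, hfx⟩ := intermediate_value_Icc hx01 hcont ⟨hf0, hf1⟩
  have hxpos : 0 < x := lt_of_lt_of_le h0pos hxmem.1
  refine ⟨x, ⟨hxpos, ?_⟩, ?_⟩
  · simp only [hf] at hfx; linarith
  · rintro y ⟨hy, hye⟩
    apply hmono.injOn (Set.mem_Ioi.mpr hy) (Set.mem_Ioi.mpr hxpos)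
    simp only [hf] at hfx ⊢
    linarith

/-- The implicit Euler scheme for `dy = a(1-β) y^{-γ} e^{bt} dt + dw̃` admits a unique
solution, with all values strictly positive. -/
theorem stmt_2 (T a b β γ y₀ : ℝ) (w : ℝ → ℝ)
    (hT : 0 < T) (ha : 0 < a) (hb : 0 ≤ b) (hβ : β ∈ Set.Ioo (0 : ℝ) 1)
    (hγ : γ = β / (1 - β)) (hy₀ : 0 < y₀)
    (hw : ContinuousOn w (Set.Icc 0 T)) (n : ℕ) (hn : 0 < n) :
    ∃! y : Fin (n + 1) → ℝ,
      y 0 = y₀ ∧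
      ∀ k : Fin n,
        0 < y k.succ ∧
        y k.succ = y k.castSucc
          + (a * (1 - β) * T / n) * (y k.succ) ^ (-γ)
              * Real.exp (b * (((k : ℕ) + 1) * T / n))
          + w (((k : ℕ) + 1) * T / n) - w ((k : ℕ) * T / n) := by
  obtain ⟨hβ0, hβ1⟩ := hβ
  have hγpos : 0 < γ := by
    rw [hγ]; exact div_pos hβ0 (by linarith)
  have hnpos : (0:ℝ) < (n:ℝ) := Nat.cast_pos.mpr hn
  set c : ℕ → ℝ := fun k =>
    (a * (1 - β) * T / n) * Real.exp (b * ((k + 1) * T / n)) with hcdef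
  have hc : ∀ k : ℕ, 0 < c k := by
    intro k
    apply mul_pos _ (Real.exp_pos _)
    apply div_pos _ hnpos
    apply mul_pos (mul_pos ha (by linarith)) hT
  set r : ℕ → ℝ → ℝ := fun k prev =>
    prev + w ((k + 1) * T / n) - w (k * T / n) with hrdef
  set P : ℕ → ℝ → ℝ → Prop := fun k prev x =>
    0 < x ∧ x = (r k prev) + c k * x ^ (-γ) with hPdef
  have hex : ∀ k prev, ∃! x, P k prev x := fun k prev =>
    key_root (c k) γ (hc k) hγpos (r k prev)
  set g : ℕ → ℝ := fun k =>
    Nat.rec y₀ (fun k prev => (hex k prev).exists.choose) k with hgdef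
  have hg0 : g 0 = y₀ := rfl
  have hgsucc : ∀ k : ℕ, P k (g k) (g (k + 1)) := fun k =>
    (hex k (g k)).exists.choose_spec
  refine ⟨fun k => g k.val, ⟨hg0, ?_⟩, ?_⟩
  · intro k
    obtain ⟨h1, h2⟩ := hgsucc k.val
    simp only [hrdef, hcdef] at h2
    refine ⟨h1, ?_⟩
    show g (k.succ).val = g (k.castSucc).val + _ + _ - _
    simp only [Fin.val_succ, Fin.coe_castSucc]
    linear_combination h2
  · rintro y' ⟨h0', hstep'⟩
    have hkey : ∀ m : ℕ, ∀ hm : m < n + 1, y' ⟨m, hm⟩ = g m := by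
      intro m
      induction m with
      | zero => intro hm; exact h0'
      | succ m ih =>
        intro hm
        have hmn : m < n := Nat.lt_of_succ_lt_succ hm
        obtain ⟨h1, h2⟩ := hstep' ⟨m, hmn⟩
        have hcs : (Fin.castSucc ⟨m, hmn⟩ : Fin (n+1)) = ⟨m, by omega⟩ := rfl
        have hss : (Fin.succ ⟨m, hmn⟩ : Fin (n+1)) = ⟨m + 1, hm⟩ := rfl
        rw [hss] at h1 h2
        rw [hcs, ih (by omega)] at h2
        simp only [Fin.val_mk] at h2
        apply (hex m (g m)).unique _ (hgsucc m)
        refine ⟨h1, ?_⟩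
        simp only [hrdef, hcdef]
        linear_combination h2
    funext k
    have : k = ⟨k.val, k.isLt⟩ := rfl
    rw [this, hkey k.val k.isLt]
end

section
/- For the implicit Euler scheme, one has the uniform bound sup_{n ∈ ℕ*} max_{0 ≤ k ≤ n} y_kⁿ ≤ y₀ + a(1-β)e^{bT} y₀^{-γ} T + 2 sup_{t∈[0,T]}|w̃_t|. -/
open Real Set

/-- Uniform bound for the implicit Euler scheme:
`sup_n max_k y_kⁿ ≤ y₀ + a(1-β)e^{bT} y₀^{-γ} T + 2 sup_{[0,T]} |w̃|`. -/
theorem stmt_3 (T a b β γ y₀ : ℝ) (w : ℝ → ℝ) (y : ℕ → ℕ → ℝ)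
    (hT : 0 < T) (ha : 0 < a) (hb : 0 ≤ b) (hβ : β ∈ Set.Ioo (0 : ℝ) 1)
    (hγ : γ = β / (1 - β)) (hy₀ : 0 < y₀)
    (hw : ContinuousOn w (Set.Icc 0 T))
    (hinit : ∀ n, y n 0 = y₀)
    (hpos : ∀ n, ∀ k ≤ n, 0 < y n k)
    (hrec : ∀ n, 0 < n → ∀ k < n,
      y n (k + 1) = y n k
        + (a * (1 - β) * T / n) * (y n (k + 1)) ^ (-γ)
            * Real.exp (b * ((k + 1 : ℕ) * T / n))
        + w ((k + 1 : ℕ) * T / n) - w ((k : ℕ) * T / n)) :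
    ∀ n, 0 < n → ∀ k ≤ n,
      y n k ≤ y₀ + a * (1 - β) * Real.exp (b * T) * y₀ ^ (-γ) * T
        + 2 * sSup ((fun t => |w t|) '' Set.Icc 0 T) := by
  intro n hn k hk
  have hn' : (0:ℝ) < n := by exact_mod_cast hn
  obtain ⟨hβ0, hβ1⟩ := hβ
  have hγpos : 0 < γ := by
    rw [hγ]; exact div_pos hβ0 (by linarith)
  set D : ℝ := a * (1 - β) * Real.exp (b * T) * y₀ ^ (-γ) with hD
  have hy₀pow : (0:ℝ) < y₀ ^ (-γ) := Real.rpow_pos_of_pos hy₀ _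
  have hDpos : 0 < D := by
    have := Real.exp_pos (b * T)
    have h1β : (0:ℝ) < 1 - β := by linarith
    positivity
  set S := sSup ((fun t => |w t|) '' Set.Icc 0 T) with hS
  have hbdd : BddAbove ((fun t => |w t|) '' Set.Icc 0 T) :=
    (isCompact_Icc.image_of_continuousOn hw.abs).bddAbove
  have hSle : ∀ t ∈ Set.Icc (0:ℝ) T, |w t| ≤ S := fun t ht => le_csSup hbdd ⟨t, ht, rfl⟩
  have hmem : ∀ j : ℕ, j ≤ n → ((j:ℝ) * T / n) ∈ Set.Icc (0:ℝ) T := by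
    intro j hj
    have hj' : (j:ℝ) ≤ n := by exact_mod_cast hj
    constructor
    · positivity
    · rw [div_le_iff₀ hn']
      nlinarith
  have key : ∀ k, k ≤ n → ∃ m, m ≤ k ∧ y n m ≤ y₀ ∧
      y n k ≤ y n m + D * (((k:ℝ) - (m:ℝ)) * T / n)
        + (w ((k:ℝ) * T / n) - w ((m:ℝ) * T / n)) := by
    intro k
    induction k with
    | zero => intro _; exact ⟨0, le_rfl, (hinit n).le, by simp⟩
    | succ k ih =>
      intro hk1
      have hkn : k ≤ n := Nat.le_of_succ_le hk1
      obtain ⟨m, hm, hmy, hky⟩ := ih hkn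
      by_cases hcase : y n (k+1) ≤ y₀
      · exact ⟨k+1, le_rfl, hcase, by simp⟩
      · push_neg at hcase
        have hrec' := hrec n hn k (Nat.lt_of_succ_le hk1)
        have hpow : (y n (k+1)) ^ (-γ) ≤ y₀ ^ (-γ) :=
          Real.rpow_le_rpow_of_nonpos hy₀ hcase.le (by linarith)
        have hexp : Real.exp (b * ((k + 1 : ℕ) * T / n)) ≤ Real.exp (b * T) := by
          apply Real.exp_le_exp.mpr
          have := (hmem (k+1) hk1).2
          nlinarith
        have hpowpos : (0:ℝ) < (y n (k+1)) ^ (-γ) :=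
          Real.rpow_pos_of_pos (hpos n (k+1) hk1) _
        have h1β : (0:ℝ) < 1 - β := by linarith
        have hdrift : (a * (1 - β) * T / n) * (y n (k + 1)) ^ (-γ)
            * Real.exp (b * ((k + 1 : ℕ) * T / n)) ≤ D * (T / n) := by
          have h1 : (a * (1 - β) * T / n) * (y n (k + 1)) ^ (-γ)
              * Real.exp (b * ((k + 1 : ℕ) * T / n))
              ≤ (a * (1 - β) * T / n) * (y₀ ^ (-γ)) * Real.exp (b * T) := by
            have hc : (0:ℝ) < a * (1 - β) * T / n := by positivity
            gcongr
          calc _ ≤ (a * (1 - β) * T / n) * (y₀ ^ (-γ)) * Real.exp (b * T) := h1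
            _ = D * (T / n) := by rw [hD]; ring
        refine ⟨m, hm.trans (Nat.le_succ k), hmy, ?_⟩
        have hstep : y n (k+1) ≤ y n k + D * (T/n)
            + (w (((k:ℕ)+1 :ℝ) * T / n) - w ((k:ℕ) * T / n)) := by
          rw [hrec']
          push_cast
          push_cast at hdrift
          linarith
        push_cast
        push_cast at hky
        have hsplit : D * (((k:ℝ) + 1 - (m:ℝ)) * T / n)
            = D * (((k:ℝ) - (m:ℝ)) * T / n) + D * (T / n) := by ring
        linarith
  obtain ⟨m, hm, hmy, hky⟩ := key k hk
  have hmn : m ≤ n := hm.trans hk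
  have hwk := hSle _ (hmem k hk)
  have hwm := hSle _ (hmem m hmn)
  have hDk : D * (((k:ℝ) - (m:ℝ)) * T / n) ≤ D * T := by
    apply mul_le_mul_of_nonneg_left _ hDpos.le
    rw [div_le_iff₀ hn']
    have hk' : (k:ℝ) ≤ n := by exact_mod_cast hk
    have hm' : (0:ℝ) ≤ m := Nat.cast_nonneg m
    nlinarith
  have hwdiff : w ((k:ℝ) * T / n) - w ((m:ℝ) * T / n) ≤ 2 * S := by
    have h1 := abs_le.mp hwk
    have h2 := abs_le.mp hwm
    linarith
  have hDT : D * T = a * (1 - β) * Real.exp (b * T) * y₀ ^ (-γ) * T := by rw [hD]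
  linarith
end

section
/- Let y¹, y² : [0,T] → (0,∞) be continuous solutions of y^i_t = y^i_0 + a(1-β)∫₀ᵗ (y^i_s)^{-γ} e^{bs} ds + w̃^i_t with y^i_0 > 0 and w̃^i continuous with w̃^i_0 = 0. Then ‖y¹ - y²‖_{∞;[0,T]} ≤ |y¹_0 - y²_0| + 2‖w̃¹ - w̃²‖_{∞;[0,T]}. -/
/-!
Let `s₀ ≤ t` be the last time at which `y¹ - y²` is at most `|y¹₀ - y²₀|`. On `(s₀, t]` we have
`y¹ > y²`, so the decreasing drift `u ↦ u^{-γ}` pushes `y¹` up by less than `y²`, and `y¹ - y²`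
can grow on `[s₀, t]` by at most the noise increment `(w̃¹ - w̃²)_t - (w̃¹ - w̃²)_{s₀}`, which is
at most `2‖w̃¹ - w̃²‖_∞`. Exchanging the roles of the two solutions gives the other sign.
-/

open Real Set intervalIntegral MeasureTheory

theorem exists_last_le_of_continuousOn {z : ℝ → ℝ} {a t c : ℝ} (hat : a ≤ t)
    (hz : ContinuousOn z (Icc a t)) (hza : z a ≤ c) :
    ∃ s₀ ∈ Icc a t, z s₀ ≤ c ∧ ∀ s ∈ Ioc s₀ t, c < z s := by
  set S := Icc a t ∩ z ⁻¹' Iic c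
  have hS : IsCompact S := isCompact_Icc.of_isClosed_subset
    (hz.preimage_isClosed_of_isClosed isClosed_Icc isClosed_Iic) inter_subset_left
  have hmem : sSup S ∈ S := hS.sSup_mem ⟨a, left_mem_Icc.2 hat, hza⟩
  refine ⟨sSup S, hmem.1, hmem.2, fun s hs => ?_⟩
  by_contra! hzs
  have : s ≤ sSup S := le_csSup hS.bddAbove ⟨⟨hmem.1.1.trans hs.1.le, hs.2⟩, hzs⟩
  linarith [hs.1]

theorem le_abs_add_two_mul_of_eq_integral {z g v : ℝ → ℝ} {T M : ℝ}
    (hz : ContinuousOn z (Icc 0 T)) (hg : IntegrableOn g (Icc 0 T))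
    (hv : ∀ s ∈ Icc 0 T, |v s| ≤ M)
    (heq : ∀ t ∈ Icc 0 T, z t = z 0 + (∫ s in 0..t, g s) + v t)
    (hg_nonpos : ∀ s ∈ Icc 0 T, 0 < z s → g s ≤ 0) {t : ℝ} (ht : t ∈ Icc 0 T) :
    z t ≤ |z 0| + 2 * M := by
  obtain ⟨s₀, hs₀, hzs₀, hz_gt⟩ := exists_last_le_of_continuousOn ht.1
    (hz.mono (Icc_subset_Icc_right ht.2)) (le_abs_self (z 0))
  have hs₀T : s₀ ∈ Icc 0 T := ⟨hs₀.1, hs₀.2.trans ht.2⟩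
  have hint : ∀ u ∈ Icc 0 T, IntervalIntegrable g volume 0 u := fun u hu =>
    (hg.mono_set (uIcc_subset_Icc (left_mem_Icc.2 (ht.1.trans ht.2)) hu)).intervalIntegrable
  have hdrift : ∫ s in s₀..t, g s ≤ 0 := by
    rw [integral_of_le hs₀.2]
    exact setIntegral_nonpos measurableSet_Ioc fun s hs => hg_nonpos s
      ⟨hs₀.1.trans hs.1.le, hs.2.trans ht.2⟩ ((abs_nonneg _).trans_lt (hz_gt s hs))
  have hincr : z t - z s₀ = (∫ s in s₀..t, g s) + (v t - v s₀) := by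
    rw [← integral_interval_sub_left (hint t ht) (hint s₀ hs₀T), heq t ht, heq s₀ hs₀T]
    ring
  linarith [(abs_le.1 (hv t ht)).2, (abs_le.1 (hv s₀ hs₀T)).1]

section AntitoneDrift

variable {F : ℝ → ℝ → ℝ} {y₁ y₂ w₁ w₂ : ℝ → ℝ} {T M : ℝ}

theorem sub_le_of_eq_integral_of_antitoneOn (hF : ∀ s ∈ Icc 0 T, AntitoneOn (F s) (Ioi 0))
    (hy₁ : ContinuousOn y₁ (Icc 0 T)) (hy₂ : ContinuousOn y₂ (Icc 0 T))
    (hy₁pos : ∀ s ∈ Icc 0 T, 0 < y₁ s) (hy₂pos : ∀ s ∈ Icc 0 T, 0 < y₂ s)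
    (hF₁ : IntegrableOn (fun s => F s (y₁ s)) (Icc 0 T))
    (hF₂ : IntegrableOn (fun s => F s (y₂ s)) (Icc 0 T))
    (hw : ∀ s ∈ Icc 0 T, |w₁ s - w₂ s| ≤ M)
    (heq₁ : ∀ t ∈ Icc 0 T, y₁ t = y₁ 0 + (∫ s in 0..t, F s (y₁ s)) + w₁ t)
    (heq₂ : ∀ t ∈ Icc 0 T, y₂ t = y₂ 0 + (∫ s in 0..t, F s (y₂ s)) + w₂ t)
    {t : ℝ} (ht : t ∈ Icc 0 T) :
    y₁ t - y₂ t ≤ |y₁ 0 - y₂ 0| + 2 * M := by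
  refine le_abs_add_two_mul_of_eq_integral (z := fun s => y₁ s - y₂ s)
    (g := fun s => F s (y₁ s) - F s (y₂ s)) (v := fun s => w₁ s - w₂ s)
    (hy₁.sub hy₂) (hF₁.sub hF₂) hw (fun u hu => ?_) (fun s hs hpos => ?_) ht
  · have hsub : uIcc 0 u ⊆ Icc 0 T := uIcc_subset_Icc (left_mem_Icc.2 (hu.1.trans hu.2)) hu
    rw [integral_sub (hF₁.mono_set hsub).intervalIntegrable (hF₂.mono_set hsub).intervalIntegrable]
    linarith [heq₁ u hu, heq₂ u hu]
  · exact sub_nonpos.2 (hF s hs (hy₂pos s hs) (hy₁pos s hs) (sub_pos.1 hpos).le)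

theorem abs_sub_le_of_eq_integral_of_antitoneOn (hF : ∀ s ∈ Icc 0 T, AntitoneOn (F s) (Ioi 0))
    (hy₁ : ContinuousOn y₁ (Icc 0 T)) (hy₂ : ContinuousOn y₂ (Icc 0 T))
    (hy₁pos : ∀ s ∈ Icc 0 T, 0 < y₁ s) (hy₂pos : ∀ s ∈ Icc 0 T, 0 < y₂ s)
    (hF₁ : IntegrableOn (fun s => F s (y₁ s)) (Icc 0 T))
    (hF₂ : IntegrableOn (fun s => F s (y₂ s)) (Icc 0 T))
    (hw : ∀ s ∈ Icc 0 T, |w₁ s - w₂ s| ≤ M)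
    (heq₁ : ∀ t ∈ Icc 0 T, y₁ t = y₁ 0 + (∫ s in 0..t, F s (y₁ s)) + w₁ t)
    (heq₂ : ∀ t ∈ Icc 0 T, y₂ t = y₂ 0 + (∫ s in 0..t, F s (y₂ s)) + w₂ t)
    {t : ℝ} (ht : t ∈ Icc 0 T) :
    |y₁ t - y₂ t| ≤ |y₁ 0 - y₂ 0| + 2 * M := by
  have hw' : ∀ s ∈ Icc 0 T, |w₂ s - w₁ s| ≤ M := fun s hs => abs_sub_comm (w₁ s) _ ▸ hw s hs
  refine abs_sub_le_iff.2 ⟨?_, ?_⟩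
  · exact sub_le_of_eq_integral_of_antitoneOn hF hy₁ hy₂ hy₁pos hy₂pos hF₁ hF₂ hw heq₁ heq₂ ht
  · rw [abs_sub_comm]
    exact sub_le_of_eq_integral_of_antitoneOn hF hy₂ hy₁ hy₂pos hy₁pos hF₂ hF₁ hw' heq₂ heq₁ ht

end AntitoneDrift

theorem antitoneOn_const_mul_rpow_neg_mul_exp {c γ : ℝ} (b s : ℝ) (hc : 0 ≤ c) (hγ : 0 ≤ γ) :
    AntitoneOn (fun u : ℝ => c * (u ^ (-γ) * exp (b * s))) (Ioi 0) := fun _ hu _ hv huv =>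
  mul_le_mul_of_nonneg_left (mul_le_mul_of_nonneg_right
    (antitoneOn_rpow_Ioi_of_exponent_nonpos (neg_nonpos.2 hγ) hu hv huv) (exp_pos _).le) hc

theorem integrableOn_const_mul_rpow_mul_exp {y : ℝ → ℝ} {T : ℝ} (c r b : ℝ)
    (hy : ContinuousOn y (Icc 0 T)) (hpos : ∀ s ∈ Icc 0 T, 0 < y s) :
    IntegrableOn (fun s => c * (y s ^ r * exp (b * s))) (Icc 0 T) :=
  (((hy.rpow_const fun s hs => Or.inl (hpos s hs).ne').mul
    (continuous_exp.comp (continuous_const_mul b)).continuousOn).const_smul c).integrableOn_Icc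

theorem stmt_4_general (T a b β γ : ℝ) (y₁ y₂ w₁ w₂ : ℝ → ℝ)
    (ha : 0 < a) (hβ : β ∈ Set.Ioo (0 : ℝ) 1)
    (hγ : γ = β / (1 - β))
    (hy₁c : ContinuousOn y₁ (Set.Icc 0 T)) (hy₂c : ContinuousOn y₂ (Set.Icc 0 T))
    (hy₁pos : ∀ t ∈ Set.Icc (0 : ℝ) T, 0 < y₁ t)
    (hy₂pos : ∀ t ∈ Set.Icc (0 : ℝ) T, 0 < y₂ t)
    (hw₁c : ContinuousOn w₁ (Set.Icc 0 T)) (hw₂c : ContinuousOn w₂ (Set.Icc 0 T))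
    (heq₁ : ∀ t ∈ Set.Icc (0 : ℝ) T,
      y₁ t = y₁ 0 + a * (1 - β) * (∫ s in (0 : ℝ)..t, (y₁ s) ^ (-γ) * Real.exp (b * s)) + w₁ t)
    (heq₂ : ∀ t ∈ Set.Icc (0 : ℝ) T,
      y₂ t = y₂ 0 + a * (1 - β) * (∫ s in (0 : ℝ)..t, (y₂ s) ^ (-γ) * Real.exp (b * s)) + w₂ t) :
    ∀ t ∈ Set.Icc (0 : ℝ) T,
      |y₁ t - y₂ t| ≤ |y₁ 0 - y₂ 0|
        + 2 * sSup ((fun s => |w₁ s - w₂ s|) '' Set.Icc 0 T) := by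
  intro t ht
  obtain ⟨hβ0, hβ1⟩ := hβ
  have hc : 0 ≤ a * (1 - β) := mul_nonneg ha.le (sub_nonneg.2 hβ1.le)
  have hγ0 : 0 ≤ γ := hγ ▸ div_nonneg hβ0.le (sub_nonneg.2 hβ1.le)
  have hw : ∀ s ∈ Icc 0 T, |w₁ s - w₂ s| ≤ sSup ((fun s => |w₁ s - w₂ s|) '' Icc 0 T) :=
    fun s hs => le_csSup ((isCompact_Icc.image_of_continuousOn (hw₁c.sub hw₂c).abs).bddAbove)
      (mem_image_of_mem _ hs)
  have heq (y w : ℝ → ℝ) (h : ∀ t ∈ Icc 0 T, y t = y 0 + a * (1 - β) *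
      (∫ s in (0 : ℝ)..t, y s ^ (-γ) * exp (b * s)) + w t) (t : ℝ) (ht : t ∈ Icc 0 T) :
      y t = y 0 + (∫ s in 0..t, a * (1 - β) * (y s ^ (-γ) * exp (b * s))) + w t := by
    rw [intervalIntegral.integral_const_mul]
    exact h t ht
  exact abs_sub_le_of_eq_integral_of_antitoneOn
    (fun s _ => antitoneOn_const_mul_rpow_neg_mul_exp b s hc hγ0) hy₁c hy₂c hy₁pos hy₂pos
    (integrableOn_const_mul_rpow_mul_exp _ _ _ hy₁c hy₁pos)
    (integrableOn_const_mul_rpow_mul_exp _ _ _ hy₂c hy₂pos) hw (heq y₁ w₁ heq₁) (heq y₂ w₂ heq₂) ht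

/-- Lipschitz estimate in sup norm: if `y¹, y²` solve
`yⁱ_t = yⁱ₀ + a(1-β)∫₀ᵗ (yⁱ_s)^{-γ} e^{bs} ds + w̃ⁱ_t`, then
`‖y¹ - y²‖_∞ ≤ |y¹₀ - y²₀| + 2 ‖w̃¹ - w̃²‖_∞`. -/
theorem stmt_4 (T a b β γ : ℝ) (y₁ y₂ w₁ w₂ : ℝ → ℝ)
    (hT : 0 < T) (ha : 0 < a) (hb : 0 ≤ b) (hβ : β ∈ Set.Ioo (0 : ℝ) 1)
    (hγ : γ = β / (1 - β))
    (hy₁c : ContinuousOn y₁ (Set.Icc 0 T)) (hy₂c : ContinuousOn y₂ (Set.Icc 0 T))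
    (hy₁pos : ∀ t ∈ Set.Icc (0 : ℝ) T, 0 < y₁ t)
    (hy₂pos : ∀ t ∈ Set.Icc (0 : ℝ) T, 0 < y₂ t)
    (hw₁c : ContinuousOn w₁ (Set.Icc 0 T)) (hw₂c : ContinuousOn w₂ (Set.Icc 0 T))
    (hw₁0 : w₁ 0 = 0) (hw₂0 : w₂ 0 = 0)
    (heq₁ : ∀ t ∈ Set.Icc (0 : ℝ) T,
      y₁ t = y₁ 0 + a * (1 - β) * (∫ s in (0 : ℝ)..t, (y₁ s) ^ (-γ) * Real.exp (b * s)) + w₁ t)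
    (heq₂ : ∀ t ∈ Set.Icc (0 : ℝ) T,
      y₂ t = y₂ 0 + a * (1 - β) * (∫ s in (0 : ℝ)..t, (y₂ s) ^ (-γ) * Real.exp (b * s)) + w₂ t)
    (hy₁0 : 0 < y₁ 0) (hy₂0 : 0 < y₂ 0) :
    ∀ t ∈ Set.Icc (0 : ℝ) T,
      |y₁ t - y₂ t| ≤ |y₁ 0 - y₂ 0|
        + 2 * sSup ((fun s => |w₁ s - w₂ s|) '' Set.Icc 0 T) :=
  stmt_4_general T a b β γ y₁ y₂ w₁ w₂ ha hβ hγ hy₁c hy₂c hy₁pos hy₂pos hw₁c hw₂c heq₁ heq₂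
end

section
/- Suppose y : [0, τ₀) → (0, ∞) is continuous, satisfies y_t + a(1-β)∫_t^{τ₀} y_s^{-γ} e^{bs} ds = w̃_t - w̃_{τ₀} for all t ∈ [0, τ₀), where w̃ is α-Hölder continuous, a > 0, and β > 1 - α (with γ = β/(1-β)). Then this leads to a contradiction; i.e., no such finite time τ₀ ∈ [0, T] at which y hits 0 can exist. -/
/-!
Near a zero `τ₀` the Hölder bound on `w` forces `y_s ≤ C ε^α` on `(τ₀ - ε, τ₀)`, so the drift
integral over that interval is at least `ε (C ε^α)^{-γ}`; the same Hölder bound caps it by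
`C ε^α / (a(1-β))`. Hence `a(1-β) ε ≤ (C ε^α)^{1+γ}`, and since `α(1+γ) = α/(1-β) > 1` the right
side vanishes faster than the left as `ε → 0`.
-/

open Real Set MeasureTheory Filter Topology

lemma sub_le_mul_rpow_of_holder {w : ℝ → ℝ} {T C α s t : ℝ}
    (hw : ∀ s ∈ Icc (0 : ℝ) T, ∀ t ∈ Icc (0 : ℝ) T, |w t - w s| ≤ C * |t - s| ^ α)
    (ht : 0 ≤ t) (hts : t ≤ s) (hs : s ≤ T) : w t - w s ≤ C * (s - t) ^ α := by
  have h := hw s ⟨ht.trans hts, hs⟩ t ⟨ht, hts.trans hs⟩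
  rw [abs_sub_comm t s, abs_of_nonneg (sub_nonneg.2 hts)] at h
  exact (le_abs_self _).trans h

lemma rpow_neg_mul_le_setIntegral {y : ℝ → ℝ} {b γ x t τ : ℝ}
    (hb : 0 ≤ b) (hγ : 0 ≤ γ) (ht : 0 ≤ t) (htτ : t ≤ τ)
    (hy : ∀ s ∈ Ioo t τ, 0 < y s ∧ y s ≤ x)
    (hint : IntegrableOn (fun s => y s ^ (-γ) * exp (b * s)) (Ioo t τ)) :
    x ^ (-γ) * (τ - t) ≤ ∫ s in Ioo t τ, y s ^ (-γ) * exp (b * s) := by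
  rw [← volume_real_Ioo_of_le htτ]
  refine setIntegral_ge_of_const_le_real measurableSet_Ioo measure_Ioo_lt_top.ne
    (fun s hs => ?_) hint
  obtain ⟨hys, hyx⟩ := hy s hs
  have hexp : 1 ≤ exp (b * s) := one_le_exp (mul_nonneg hb (ht.trans hs.1.le))
  calc x ^ (-γ) ≤ y s ^ (-γ) := rpow_le_rpow_of_nonpos hys hyx (neg_nonpos.2 hγ)
    _ ≤ y s ^ (-γ) * exp (b * s) := le_mul_of_one_le_right (rpow_nonneg hys.le _) hexp

lemma le_rpow_one_add_of_mul_rpow_neg_le {c x γ : ℝ} (hx : 0 < x) (h : c * x ^ (-γ) ≤ x) :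
    c ≤ x ^ (1 + γ) := by
  rwa [rpow_add hx, rpow_one, ← div_le_iff₀ (rpow_pos_of_pos hx γ), div_eq_mul_inv,
    ← rpow_neg hx.le]

lemma exists_mul_rpow_rpow_lt {κ C α p τ : ℝ} (hκ : 0 < κ) (hC : 0 ≤ C) (hp : 1 < α * p)
    (hτ : 0 < τ) : ∃ ε ∈ Ioc 0 τ, (C * ε ^ α) ^ p < κ * ε := by
  have hlim : Tendsto (fun ε : ℝ => C ^ p * ε ^ (α * p - 1)) (𝓝[>] 0) (𝓝 0) := by
    have h := ((continuousAt_rpow_const 0 (α * p - 1) (Or.inr (by linarith))).tendsto.const_mul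
      (C ^ p)).mono_left (nhdsWithin_le_nhds (s := Ioi 0))
    rwa [zero_rpow (by linarith), mul_zero] at h
  obtain ⟨ε, hlt, hε0, hετ⟩ := ((hlim.eventually (gt_mem_nhds hκ)).and (Ioc_mem_nhdsGT hτ)).exists
  refine ⟨ε, ⟨hε0, hετ⟩, ?_⟩
  have hsplit : (C * ε ^ α) ^ p = C ^ p * ε ^ (α * p - 1) * ε := by
    rw [mul_rpow hC (rpow_nonneg hε0.le α), ← rpow_mul hε0.le, mul_assoc,
      ← rpow_add_one hε0.ne', sub_add_cancel]
  rw [hsplit]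
  exact mul_lt_mul_of_pos_right hlt hε0

lemma mul_sub_le_rpow_of_mul_setIntegral_le {y : ℝ → ℝ} {b γ α C κ t τ : ℝ}
    (hb : 0 ≤ b) (hγ : 0 ≤ γ) (hα : 0 ≤ α) (hC : 0 ≤ C) (hκ : 0 ≤ κ) (ht : 0 ≤ t) (htτ : t < τ)
    (hpos : ∀ s ∈ Ico t τ, 0 < y s) (hy : ∀ s ∈ Ico t τ, y s ≤ C * (τ - s) ^ α)
    (hint : IntegrableOn (fun s => y s ^ (-γ) * exp (b * s)) (Ioo t τ))
    (hupper : κ * ∫ s in Ioo t τ, y s ^ (-γ) * exp (b * s) ≤ C * (τ - t) ^ α) :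
    κ * (τ - t) ≤ (C * (τ - t) ^ α) ^ (1 + γ) := by
  have hbound s (hs : s ∈ Ioo t τ) : 0 < y s ∧ y s ≤ C * (τ - t) ^ α := by
    refine ⟨hpos s (Ioo_subset_Ico_self hs), (hy s (Ioo_subset_Ico_self hs)).trans ?_⟩
    gcongr <;> linarith [hs.1, hs.2]
  refine le_rpow_one_add_of_mul_rpow_neg_le ((hpos t ⟨le_rfl, htτ⟩).trans_le
    (hy t ⟨le_rfl, htτ⟩)) ?_
  have hlow := rpow_neg_mul_le_setIntegral hb hγ ht htτ.le hbound hint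
  linarith [mul_le_mul_of_nonneg_left hlow hκ]

lemma one_lt_mul_one_add_div_one_sub {α β : ℝ} (hβ : 1 - α < β) (hβ1 : β < 1) :
    1 < α * (1 + β / (1 - β)) := by
  rw [one_add_div (sub_pos.2 hβ1).ne', sub_add_cancel, mul_one_div, one_lt_div (sub_pos.2 hβ1)]
  linarith

theorem stmt_6_general (T a b α β γ τ₀ C : ℝ) (y w : ℝ → ℝ)
    (ha : 0 < a) (hb : 0 ≤ b)
    (hα : α ∈ Set.Ioc (0 : ℝ) 1) (hβ : β ∈ Set.Ioc (1 - α) 1) (hβ1 : β < 1)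
    (hγ : γ = β / (1 - β))
    (hτ₀ : τ₀ ∈ Set.Ioc (0 : ℝ) T)
    (hC : 0 ≤ C)
    (hwHol : ∀ s ∈ Set.Icc (0 : ℝ) T, ∀ t ∈ Set.Icc (0 : ℝ) T,
      |w t - w s| ≤ C * |t - s| ^ α)
    (hypos : ∀ t ∈ Set.Ico (0 : ℝ) τ₀, 0 < y t)
    (hint : ∀ t ∈ Set.Ico (0 : ℝ) τ₀,
      IntegrableOn (fun s => (y s) ^ (-γ) * Real.exp (b * s)) (Set.Ioo t τ₀))
    (heq : ∀ t ∈ Set.Ico (0 : ℝ) τ₀,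
      y t + a * (1 - β) * (∫ s in Set.Ioo t τ₀, (y s) ^ (-γ) * Real.exp (b * s))
        = w t - w τ₀) :
    False := by
  obtain ⟨hτ0, hτT⟩ := hτ₀
  have hκ : 0 < a * (1 - β) := mul_pos ha (sub_pos.2 hβ1)
  have hγ0 : 0 ≤ γ := hγ ▸ div_nonneg (by linarith [hα.2, hβ.1]) (sub_pos.2 hβ1).le
  have hw t (ht : t ∈ Ico 0 τ₀) := sub_le_mul_rpow_of_holder hwHol ht.1 ht.2.le hτT
  have hI t (ht : t ∈ Ico 0 τ₀) : 0 ≤ ∫ s in Ioo t τ₀, y s ^ (-γ) * exp (b * s) :=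
    setIntegral_nonneg measurableSet_Ioo fun s hs =>
      have := hypos s ⟨ht.1.trans hs.1.le, hs.2⟩
      by positivity
  have hy t (ht : t ∈ Ico 0 τ₀) : y t ≤ C * (τ₀ - t) ^ α := by
    linarith [heq t ht, hw t ht, mul_nonneg hκ.le (hI t ht)]
  obtain ⟨ε, ⟨hε0, hετ⟩, hlt⟩ :=
    exists_mul_rpow_rpow_lt hκ hC (hγ ▸ one_lt_mul_one_add_div_one_sub hβ.1 hβ1) hτ0
  have ht : τ₀ - ε ∈ Ico 0 τ₀ := ⟨by linarith, by linarith⟩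
  have hkey := mul_sub_le_rpow_of_mul_setIntegral_le hb hγ0 hα.1.le hC hκ.le ht.1 ht.2
    (fun s hs => hypos s ⟨ht.1.trans hs.1, hs.2⟩) (fun s hs => hy s ⟨ht.1.trans hs.1, hs.2⟩)
    (hint _ ht) (by linarith [heq _ ht, hw _ ht, hypos _ ht])
  rw [sub_sub_cancel] at hkey
  exact hlt.not_ge hkey

/-- Non-explosion: when `β > 1 - α`, there is no finite time `τ₀ ∈ [0,T]` at which a
positive continuous solution of `y_t + a(1-β)∫_t^{τ₀} y_s^{-γ}e^{bs}ds = w̃_t - w̃_{τ₀}`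
can hit `0`. -/
theorem stmt_6 (T a b α β γ τ₀ C : ℝ) (y w : ℝ → ℝ)
    (hT : 0 < T) (ha : 0 < a) (hb : 0 ≤ b)
    (hα : α ∈ Set.Ioc (0 : ℝ) 1) (hβ : β ∈ Set.Ioc (1 - α) 1) (hβ1 : β < 1)
    (hγ : γ = β / (1 - β))
    (hτ₀ : τ₀ ∈ Set.Ioc (0 : ℝ) T)
    (hC : 0 ≤ C)
    (hwHol : ∀ s ∈ Set.Icc (0 : ℝ) T, ∀ t ∈ Set.Icc (0 : ℝ) T,
      |w t - w s| ≤ C * |t - s| ^ α)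
    (hyc : ContinuousOn y (Set.Ico 0 τ₀))
    (hypos : ∀ t ∈ Set.Ico (0 : ℝ) τ₀, 0 < y t)
    (hint : ∀ t ∈ Set.Ico (0 : ℝ) τ₀,
      IntegrableOn (fun s => (y s) ^ (-γ) * Real.exp (b * s)) (Set.Ioo t τ₀))
    (heq : ∀ t ∈ Set.Ico (0 : ℝ) τ₀,
      y t + a * (1 - β) * (∫ s in Set.Ioo t τ₀, (y s) ^ (-γ) * Real.exp (b * s))
        = w t - w τ₀) :
    False :=
  stmt_6_general T a b α β γ τ₀ C y w ha hb hα hβ hβ1 hγ hτ₀ hC hwHol hypos hint heq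
end

section
/- Monotonicity in the parameters: for a ≥ 0 and b ≥ 0, the solutions satisfy x(0,b) ≤ x(a,b) ≤ x(a,0) pointwise on [0, τ₀ ∧ T], where x(a,b) denotes the solution of dx = (a - bx)dt + σ x^β dw with initial condition x₀ > 0. -/
/-!
The lower bound is immediate: `y(a,b) - y(0,b)` is `a(1-β)` times the integral of a positive
function. For the upper bound, variation of constants shows that `z = e^{-b(1-β)t} y(a,b)`
solves `z = x₀^{1-β} + σ(1-β)(w - w₀) + ∫ (a(1-β) z^{-γ} - b(1-β) z)`, the equation of `y(a,0)`
with the extra damping `-b(1-β) z ≤ 0`. Were `y(a,0) - z` ever negative, then after the last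
time it was nonnegative its derivative `a(1-β)(y(a,0)^{-γ} - z^{-γ}) + b(1-β) z` would be
nonnegative, a contradiction. Finally `z^{γ+1} = y(a,b)^{γ+1} e^{-bt}` because `(1-β)(γ+1) = 1`.
-/

open Real Set intervalIntegral MeasureTheory

section IntegralEquation

variable {a b : ℝ} {P f : ℝ → ℝ}

theorem continuousOn_of_eq_add_integral (hf : IntervalIntegrable f volume a b) (hab : a ≤ b)
    (hP : ∀ t ∈ Icc a b, P t = P a + ∫ u in a..t, f u) : ContinuousOn P (Icc a b) := by
  have hprim := continuousOn_primitive_interval' hf left_mem_uIcc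
  rw [uIcc_of_le hab] at hprim
  exact (hprim.const_add (P a)).congr hP

theorem hasDerivAt_of_eq_add_integral (hf : ContinuousOn f (Icc a b)) {x : ℝ} (hx : x ∈ Ioo a b)
    (hP : ∀ t ∈ Icc a b, P t = P a + ∫ u in a..t, f u) : HasDerivAt P (f x) x := by
  have hPx : P =ᶠ[nhds x] fun t => P a + ∫ u in a..t, f u :=
    Filter.eventually_of_mem (Icc_mem_nhds hx.1 hx.2) hP
  refine (HasDerivAt.const_add (P a) ?_).congr_of_eventuallyEq hPx
  exact integral_hasDerivAt_right
    ((hf.mono (Icc_subset_Icc_right hx.2.le)).intervalIntegrable_of_Icc hx.1.le)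
    ((hf.mono Ioo_subset_Icc_self).stronglyMeasurableAtFilter isOpen_Ioo x hx)
    (hf.continuousAt (Icc_mem_nhds hx.1 hx.2))

theorem nonneg_of_eq_add_integral {g : ℝ → ℝ} (hg : IntervalIntegrable g volume a b)
    (hd : ∀ t ∈ Icc a b, P t = P a + ∫ u in a..t, g u) (ha : 0 ≤ P a)
    (hgP : ∀ t ∈ Icc a b, P t < 0 → 0 ≤ g t) : ∀ t ∈ Icc a b, 0 ≤ P t := by
  intro t₁ ht₁
  by_contra! hneg
  have hab : a ≤ b := ht₁.1.trans ht₁.2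
  have hPc := continuousOn_of_eq_add_integral hg hab hd
  set S := {t ∈ Icc a t₁ | 0 ≤ P t}
  have hSbdd : BddAbove S := ⟨t₁, fun x hx => hx.1.2⟩
  have hSclosed : IsClosed S :=
    (hPc.mono (Icc_subset_Icc_right ht₁.2)).preimage_isClosed_of_isClosed isClosed_Icc
      isClosed_Ici
  obtain ⟨⟨hats, htst₁⟩, hPts⟩ : sSup S ∈ S :=
    hSclosed.csSup_mem ⟨a, ⟨left_mem_Icc.2 ht₁.1, ha⟩⟩ hSbdd
  set ts := sSup S
  have hts : ts ∈ Icc a b := ⟨hats, htst₁.trans ht₁.2⟩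
  have htslt : ts < t₁ := htst₁.lt_of_ne fun h => (h ▸ hneg).not_ge hPts
  -- `ts` is the last time before `t₁` with `P ≥ 0`; after it `P < 0`, hence `g ≥ 0`
  have hgnn : ∀ u ∈ Ioc ts t₁, 0 ≤ g u := by
    intro u hu
    have hu_b : u ∈ Icc a b := ⟨hats.trans hu.1.le, hu.2.trans ht₁.2⟩
    refine hgP u hu_b (not_le.1 fun h => ?_)
    exact hu.1.not_ge (le_csSup hSbdd ⟨⟨hu_b.1, hu.2⟩, h⟩)
  have hint : ∀ x ∈ Icc a b, ∀ y ∈ Icc a b, IntervalIntegrable g volume x y :=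
    fun x hx y hy => hg.mono_set (uIcc_subset_uIcc (Icc_subset_uIcc hx) (Icc_subset_uIcc hy))
  have hla : a ∈ Icc a b := left_mem_Icc.2 hab
  have hlast : 0 ≤ ∫ u in ts..t₁, g u := by
    rw [integral_of_le htslt.le]
    exact setIntegral_nonneg measurableSet_Ioc hgnn
  have hP₁ : P t₁ = P ts + ∫ u in ts..t₁, g u := by
    rw [hd t₁ ht₁, hd ts hts, add_assoc,
      integral_add_adjacent_intervals (hint a hla ts hts) (hint ts hts t₁ ht₁)]
  linarith

end IntegralEquation

theorem exp_neg_mul_mul_eq_of_eq_add_integral {c τ : ℝ} {P h : ℝ → ℝ}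
    (hh : ContinuousOn h (Icc 0 τ))
    (hP : ∀ t ∈ Icc 0 τ, P t = P 0 + ∫ u in (0 : ℝ)..t, exp (c * u) * h u) :
    ∀ t ∈ Icc 0 τ,
      exp (-(c * t)) * P t = P 0 + ∫ u in (0 : ℝ)..t, (h u - c * (exp (-(c * u)) * P u)) := by
  intro t ht
  have hexp : Continuous fun u : ℝ => exp (-(c * u)) := by fun_prop
  have hPh : ContinuousOn (fun u => exp (c * u) * h u) (Icc 0 τ) :=
    (continuous_exp.comp (continuous_const_mul c)).continuousOn.mul hh
  have hPc : ContinuousOn P (Icc 0 τ) :=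
    continuousOn_of_eq_add_integral (hPh.intervalIntegrable_of_Icc (ht.1.trans ht.2))
      (ht.1.trans ht.2) hP
  have hderiv : ∀ x ∈ Ioo 0 t, HasDerivAt (fun u => exp (-(c * u)) * P u)
      (h x - c * (exp (-(c * x)) * P x)) x := by
    intro x hx
    have hP' := hasDerivAt_of_eq_add_integral hPh ⟨hx.1, hx.2.trans_le ht.2⟩ hP
    have hlin : HasDerivAt (fun u : ℝ => -(c * u)) (-c) x := by
      simpa using ((hasDerivAt_id x).const_mul c).fun_neg
    refine (hlin.exp.mul hP').congr_deriv ?_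
    rw [← mul_assoc, ← exp_add, neg_add_cancel, exp_zero]
    ring
  have hcont : ContinuousOn (fun u => exp (-(c * u)) * P u) (Icc 0 t) :=
    hexp.continuousOn.mul (hPc.mono (Icc_subset_Icc_right ht.2))
  have hint : IntervalIntegrable (fun u => h u - c * (exp (-(c * u)) * P u)) volume 0 t :=
    ((hh.mono (Icc_subset_Icc_right ht.2)).sub
      (continuousOn_const.mul hcont)).intervalIntegrable_of_Icc ht.1
  rw [integral_eq_sub_of_hasDerivAt_of_le ht.1 hcont hderiv hint]
  simp

theorem exp_neg_mul_eq_damped {c s X τ : ℝ} {y w f : ℝ → ℝ}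
    (hf : ContinuousOn f (Icc 0 τ)) (hw : ContinuousOn w (Icc 0 τ))
    (hy : ∀ t ∈ Icc 0 τ, y t = X + (∫ u in (0 : ℝ)..t, exp (c * u) * f u)
        + s * (exp (c * t) * w t - w 0 - c * ∫ u in (0 : ℝ)..t, exp (c * u) * w u)) :
    ∀ t ∈ Icc 0 τ, exp (-(c * t)) * y t
      = X + s * (w t - w 0) + ∫ u in (0 : ℝ)..t, (f u - c * (exp (-(c * u)) * y u)) := by
  intro t ht
  have hexp_cancel : ∀ u, exp (-(c * u)) * exp (c * u) = 1 := fun u => by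
    rw [← exp_add, neg_add_cancel, exp_zero]
  have hexp : ContinuousOn (fun u : ℝ => exp (c * u)) (Icc 0 τ) := by fun_prop
  have hy0 : y 0 = X := by simpa using hy 0 (left_mem_Icc.2 (ht.1.trans ht.2))
  -- subtracting the boundary term `s e^{ct} w_t` leaves an equation of the previous form
  have hP : ∀ t ∈ Icc 0 τ, y t - s * (exp (c * t) * w t)
      = (y 0 - s * (exp (c * 0) * w 0))
        + ∫ u in (0 : ℝ)..t, exp (c * u) * (f u - s * c * w u) := by
    intro t ht
    have hsub : Icc 0 t ⊆ Icc 0 τ := Icc_subset_Icc_right ht.2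
    have hIf : IntervalIntegrable (fun u => exp (c * u) * f u) volume 0 t :=
      ((hexp.mul hf).mono hsub).intervalIntegrable_of_Icc ht.1
    have hIw : IntervalIntegrable (fun u => exp (c * u) * w u) volume 0 t :=
      ((hexp.mul hw).mono hsub).intervalIntegrable_of_Icc ht.1
    have hsplit : (∫ u in (0 : ℝ)..t, exp (c * u) * (f u - s * c * w u))
        = (∫ u in (0 : ℝ)..t, exp (c * u) * f u)
          - s * c * ∫ u in (0 : ℝ)..t, exp (c * u) * w u := by
      rw [← intervalIntegral.integral_const_mul (s * c),
        ← intervalIntegral.integral_sub hIf (hIw.const_mul _)]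
      congr 1 with u
      ring
    rw [hsplit, hy t ht, hy0]
    simp only [mul_zero, exp_zero, one_mul]
    ring
  have hdamp := exp_neg_mul_mul_eq_of_eq_add_integral (h := fun u => f u - s * c * w u)
    (hf.sub (continuousOn_const.mul hw)) hP t ht
  have hintegrand :
      (fun u => f u - s * c * w u - c * (exp (-(c * u)) * (y u - s * (exp (c * u) * w u))))
        = fun u => f u - c * (exp (-(c * u)) * y u) := by
    funext u
    linear_combination (s * c * w u) * hexp_cancel u
  rw [hintegrand, hy0] at hdamp
  simp only [mul_zero, exp_zero, one_mul] at hdamp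
  linear_combination hdamp + s * w t * hexp_cancel t

theorem le_of_damped_of_undamped {c τ : ℝ} {F A z y : ℝ → ℝ} (hc : 0 ≤ c)
    (hF : ContinuousOn F (Ioi 0)) (hF_anti : AntitoneOn F (Ioi 0))
    (hzc : ContinuousOn z (Icc 0 τ)) (hyc : ContinuousOn y (Icc 0 τ))
    (hz : ∀ t ∈ Icc 0 τ, 0 < z t) (hy : ∀ t ∈ Icc 0 τ, 0 < y t)
    (hzeq : ∀ t ∈ Icc 0 τ, z t = A t + ∫ u in (0 : ℝ)..t, (F (z u) - c * z u))
    (hyeq : ∀ t ∈ Icc 0 τ, y t = A t + ∫ u in (0 : ℝ)..t, F (y u)) :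
    ∀ t ∈ Icc 0 τ, z t ≤ y t := by
  intro t ht
  have hτ : 0 ≤ τ := ht.1.trans ht.2
  have hFz : ContinuousOn (fun u => F (z u) - c * z u) (Icc 0 τ) :=
    (hF.comp hzc hz).sub (continuousOn_const.mul hzc)
  have hFy : ContinuousOn (fun u => F (y u)) (Icc 0 τ) := hF.comp hyc hy
  have hdiff : ∀ t ∈ Icc 0 τ, y t - z t
      = (y 0 - z 0) + ∫ u in (0 : ℝ)..t, (F (y u) - (F (z u) - c * z u)) := by
    intro t ht
    have hsub : Icc 0 t ⊆ Icc 0 τ := Icc_subset_Icc_right ht.2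
    rw [intervalIntegral.integral_sub ((hFy.mono hsub).intervalIntegrable_of_Icc ht.1)
      ((hFz.mono hsub).intervalIntegrable_of_Icc ht.1), hyeq t ht, hzeq t ht,
      hyeq 0 (left_mem_Icc.2 hτ), hzeq 0 (left_mem_Icc.2 hτ)]
    simp only [integral_same]
    ring
  have hnonneg := nonneg_of_eq_add_integral (g := fun u => F (y u) - (F (z u) - c * z u))
    ((hFy.sub hFz).intervalIntegrable_of_Icc hτ) hdiff
    (by rw [hyeq 0 (left_mem_Icc.2 hτ), hzeq 0 (left_mem_Icc.2 hτ)]; simp)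
    (fun u hu hlt => by
      have hFzy : F (z u) ≤ F (y u) := hF_anti (hy u hu) (hz u hu) (by linarith)
      linarith [mul_nonneg hc (hz u hu).le])
  linarith [hnonneg t ht]

theorem exp_mul_mul_rpow (x p : ℝ) {y : ℝ} (hy : 0 ≤ y) :
    (exp x * y) ^ p = exp (x * p) * y ^ p := by
  rw [mul_rpow (exp_pos x).le hy, ← exp_mul]

theorem exp_neg_mul_eq_damped_rpow {c k s X γ τ : ℝ} {y w : ℝ → ℝ}
    (hyc : ContinuousOn y (Icc 0 τ)) (hy_pos : ∀ t ∈ Icc 0 τ, 0 < y t)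
    (hw : ContinuousOn w (Icc 0 τ))
    (hy : ∀ t ∈ Icc 0 τ, y t = X + k * (∫ u in (0 : ℝ)..t, y u ^ (-γ) * exp (c * (γ + 1) * u))
        + s * (exp (c * t) * w t - w 0 - c * ∫ u in (0 : ℝ)..t, exp (c * u) * w u)) :
    ∀ t ∈ Icc 0 τ, exp (-(c * t)) * y t = X + s * (w t - w 0)
      + ∫ u in (0 : ℝ)..t, (k * (exp (-(c * u)) * y u) ^ (-γ) - c * (exp (-(c * u)) * y u)) := by
  have hz_pos : ∀ t ∈ Icc 0 τ, 0 < exp (-(c * t)) * y t :=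
    fun t ht => mul_pos (exp_pos _) (hy_pos t ht)
  have hzc : ContinuousOn (fun t => exp (-(c * t)) * y t) (Icc 0 τ) :=
    (continuous_exp.comp (by fun_prop)).continuousOn.mul hyc
  refine exp_neg_mul_eq_damped (f := fun u => k * (exp (-(c * u)) * y u) ^ (-γ))
    (continuousOn_const.mul (hzc.rpow_const fun u hu => Or.inl (hz_pos u hu).ne')) hw
    fun t ht => ?_
  have hI : (∫ u in (0 : ℝ)..t, exp (c * u) * (k * (exp (-(c * u)) * y u) ^ (-γ)))
      = k * ∫ u in (0 : ℝ)..t, y u ^ (-γ) * exp (c * (γ + 1) * u) := by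
    rw [← intervalIntegral.integral_const_mul]
    refine integral_congr fun u hu => ?_
    rw [uIcc_of_le ht.1] at hu
    have hexp : exp (c * (γ + 1) * u) = exp (c * u) * exp (-(c * u) * -γ) := by
      rw [← exp_add]; ring_nf
    rw [exp_mul_mul_rpow _ _ (hy_pos u ⟨hu.1, hu.2.trans ht.2⟩).le, hexp]
    ring
  rw [hI, hy t ht]

/-- `e^{ct} w_t - w_0 - c ∫₀ᵗ e^{cu} w_u du` is the Young integral `∫₀ᵗ e^{cu} dw_u`, written via
integration by parts. -/
theorem stmt_12_general (T a b σ α β γ x₀ τ : ℝ) (w yab y0b ya0 : ℝ → ℝ)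
    (ha : 0 ≤ a) (hb : 0 ≤ b)
    (hα : α ∈ Set.Ioc (0 : ℝ) 1) (hβ : β ∈ Set.Ioc (1 - α) 1) (hβ1 : β < 1)
    (hγ : γ = β / (1 - β)) (hτ : τ ∈ Set.Icc (0 : ℝ) T)
    (hwc : ContinuousOn w (Set.Icc 0 T))
    (hab_c : ContinuousOn yab (Set.Icc 0 τ))
    (ha0_c : ContinuousOn ya0 (Set.Icc 0 τ))
    (hab_pos : ∀ t ∈ Set.Icc (0 : ℝ) τ, 0 < yab t)
    (h0b_pos : ∀ t ∈ Set.Icc (0 : ℝ) τ, 0 < y0b t)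
    (ha0_pos : ∀ t ∈ Set.Icc (0 : ℝ) τ, 0 < ya0 t)
    (hab_eq : ∀ t ∈ Set.Icc (0 : ℝ) τ,
      yab t = x₀ ^ (1 - β)
        + a * (1 - β) * (∫ s in (0 : ℝ)..t, (yab s) ^ (-γ) * Real.exp (b * s))
        + σ * (1 - β) * (Real.exp (b * (1 - β) * t) * w t - w 0
            - b * (1 - β) * ∫ u in (0 : ℝ)..t, Real.exp (b * (1 - β) * u) * w u))
    (h0b_eq : ∀ t ∈ Set.Icc (0 : ℝ) τ,
      y0b t = x₀ ^ (1 - β)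
        + σ * (1 - β) * (Real.exp (b * (1 - β) * t) * w t - w 0
            - b * (1 - β) * ∫ u in (0 : ℝ)..t, Real.exp (b * (1 - β) * u) * w u))
    (ha0_eq : ∀ t ∈ Set.Icc (0 : ℝ) τ,
      ya0 t = x₀ ^ (1 - β)
        + a * (1 - β) * (∫ s in (0 : ℝ)..t, (ya0 s) ^ (-γ))
        + σ * (1 - β) * (w t - w 0)) :
    ∀ t ∈ Set.Icc (0 : ℝ) τ,
      (y0b t) ^ (γ + 1) * Real.exp (-(b * t)) ≤ (yab t) ^ (γ + 1) * Real.exp (-(b * t)) ∧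
      (yab t) ^ (γ + 1) * Real.exp (-(b * t)) ≤ (ya0 t) ^ (γ + 1) := by
  have h1β : 0 < 1 - β := by linarith
  have hγ0 : 0 ≤ γ := hγ ▸ div_nonneg (by linarith [hα.2, hβ.1]) h1β.le
  have hbγ : b * (1 - β) * (γ + 1) = b := by rw [hγ]; field_simp; ring
  set c := b * (1 - β)
  set k := a * (1 - β)
  have hF : ContinuousOn (fun x : ℝ => k * x ^ (-γ)) (Ioi 0) :=
    continuousOn_const.mul (continuousOn_id.rpow_const fun x hx => Or.inl (ne_of_gt hx))
  have hF_anti : AntitoneOn (fun x : ℝ => k * x ^ (-γ)) (Ioi 0) := fun x hx y _ hxy =>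
    mul_le_mul_of_nonneg_left (rpow_le_rpow_of_nonpos hx hxy (by linarith)) (by positivity)
  have hz_eq := exp_neg_mul_eq_damped_rpow hab_c hab_pos (hwc.mono (Icc_subset_Icc_right hτ.2))
    fun t ht => by rw [hab_eq t ht, hbγ]
  have hz_le := le_of_damped_of_undamped (mul_nonneg hb h1β.le) hF hF_anti
    ((continuous_exp.comp (by fun_prop)).continuousOn.mul hab_c) ha0_c
    (fun t ht => mul_pos (exp_pos _) (hab_pos t ht)) ha0_pos hz_eq
    (fun t ht => by rw [ha0_eq t ht, intervalIntegral.integral_const_mul]; ring)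
  intro t ht
  constructor
  · have hI : 0 ≤ ∫ s in (0 : ℝ)..t, (yab s) ^ (-γ) * Real.exp (b * s) :=
      intervalIntegral.integral_nonneg ht.1 fun u hu =>
        mul_nonneg (rpow_nonneg (hab_pos u ⟨hu.1, hu.2.trans ht.2⟩).le _) (exp_pos _).le
    have hle : y0b t ≤ yab t := by
      rw [hab_eq t ht, h0b_eq t ht]
      nlinarith [mul_nonneg (mul_nonneg ha h1β.le) hI]
    exact mul_le_mul_of_nonneg_right (rpow_le_rpow (h0b_pos t ht).le hle (by linarith))
      (exp_pos _).le
  · calc yab t ^ (γ + 1) * exp (-(b * t)) = (exp (-(c * t)) * yab t) ^ (γ + 1) := by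
          rw [exp_mul_mul_rpow _ _ (hab_pos t ht).le, ← hbγ]; ring_nf
      _ ≤ ya0 t ^ (γ + 1) :=
          rpow_le_rpow (mul_pos (exp_pos _) (hab_pos t ht)).le (hz_le t ht) (by linarith)

/-- Monotonicity in the parameters: `x(0,b) ≤ x(a,b) ≤ x(a,0)` pointwise, where
`x(a,b) = y(a,b)^{γ+1}e^{-b·}` and `y(a,b)` solves
`y_t = x₀^{1-β} + a(1-β)∫₀ᵗ y_s^{-γ}e^{bs}ds + w̃_b(t)`, the Young integral
`w̃_b(t) = σ(1-β)∫₀ᵗ e^{b(1-β)s}dw_s` being expressed via integration by parts. -/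
theorem stmt_12 (T a b σ α β γ x₀ τ : ℝ) (w yab y0b ya0 : ℝ → ℝ)
    (hT : 0 < T) (ha : 0 ≤ a) (hb : 0 ≤ b) (hσ : 0 ≤ σ)
    (hα : α ∈ Set.Ioc (0 : ℝ) 1) (hβ : β ∈ Set.Ioc (1 - α) 1) (hβ1 : β < 1)
    (hγ : γ = β / (1 - β)) (hx₀ : 0 < x₀) (hτ : τ ∈ Set.Icc (0 : ℝ) T)
    (hwc : ContinuousOn w (Set.Icc 0 T))
    (hab_c : ContinuousOn yab (Set.Icc 0 τ))
    (h0b_c : ContinuousOn y0b (Set.Icc 0 τ))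
    (ha0_c : ContinuousOn ya0 (Set.Icc 0 τ))
    (hab_pos : ∀ t ∈ Set.Icc (0 : ℝ) τ, 0 < yab t)
    (h0b_pos : ∀ t ∈ Set.Icc (0 : ℝ) τ, 0 < y0b t)
    (ha0_pos : ∀ t ∈ Set.Icc (0 : ℝ) τ, 0 < ya0 t)
    (hab_eq : ∀ t ∈ Set.Icc (0 : ℝ) τ,
      yab t = x₀ ^ (1 - β)
        + a * (1 - β) * (∫ s in (0 : ℝ)..t, (yab s) ^ (-γ) * Real.exp (b * s))
        + σ * (1 - β) * (Real.exp (b * (1 - β) * t) * w t - w 0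
            - b * (1 - β) * ∫ u in (0 : ℝ)..t, Real.exp (b * (1 - β) * u) * w u))
    (h0b_eq : ∀ t ∈ Set.Icc (0 : ℝ) τ,
      y0b t = x₀ ^ (1 - β)
        + σ * (1 - β) * (Real.exp (b * (1 - β) * t) * w t - w 0
            - b * (1 - β) * ∫ u in (0 : ℝ)..t, Real.exp (b * (1 - β) * u) * w u))
    (ha0_eq : ∀ t ∈ Set.Icc (0 : ℝ) τ,
      ya0 t = x₀ ^ (1 - β)
        + a * (1 - β) * (∫ s in (0 : ℝ)..t, (ya0 s) ^ (-γ))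
        + σ * (1 - β) * (w t - w 0)) :
    ∀ t ∈ Set.Icc (0 : ℝ) τ,
      (y0b t) ^ (γ + 1) * Real.exp (-(b * t)) ≤ (yab t) ^ (γ + 1) * Real.exp (-(b * t)) ∧
      (yab t) ^ (γ + 1) * Real.exp (-(b * t)) ≤ (ya0 t) ^ (γ + 1) :=
  stmt_12_general T a b σ α β γ x₀ τ w yab y0b ya0 ha hb hα hβ hβ1 hγ hτ hwc hab_c ha0_c hab_pos
    h0b_pos ha0_pos hab_eq h0b_eq ha0_eq
end

section
/- For the one-step Euler comparison: if y_{i+1} and z_{i+1} are positive reals with y_{i+1} = y_i + B (y_{i+1})^{-γ} + Δ and z_{i+1} = z_i + B (z_{i+1})^{-γ} + Δ + ε_i with B > 0 and γ > 0, then |y_{i+1} - z_{i+1}| ≤ |y_i - z_i| + |ε_i|. -/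
open Real

/-- One-step comparison for the implicit Euler scheme: if
`y₁ = y₀ + B y₁^{-γ} + Δ` and `z₁ = z₀ + B z₁^{-γ} + Δ + ε`, with `B, γ > 0` and all
of `y₀, z₀, y₁, z₁` positive, then `|y₁ - z₁| ≤ |y₀ - z₀| + |ε|`. -/
theorem stmt_13 (B γ Δ ε y₀ z₀ y₁ z₁ : ℝ)
    (hB : 0 < B) (hγ : 0 < γ)
    (hy₀ : 0 < y₀) (hz₀ : 0 < z₀) (hy₁ : 0 < y₁) (hz₁ : 0 < z₁)
    (hy : y₁ = y₀ + B * y₁ ^ (-γ) + Δ)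
    (hz : z₁ = z₀ + B * z₁ ^ (-γ) + Δ + ε) :
    |y₁ - z₁| ≤ |y₀ - z₀| + |ε| := by
  have key : ∀ a b : ℝ, 0 < a → a ≤ b → b ^ (-γ) ≤ a ^ (-γ) := by
    intro a b ha hab
    exact Real.rpow_le_rpow_of_nonpos ha hab (by linarith)
  have h1 : |y₀ - z₀ - ε| ≤ |y₀ - z₀| + |ε| := by
    have := abs_add_le (y₀ - z₀) (-ε)
    simpa [sub_eq_add_neg] using this
  refine le_trans ?_ h1
  rcases le_total y₁ z₁ with h | h
  · have hm : y₁ ^ (-γ) ≥ z₁ ^ (-γ) := key y₁ z₁ hy₁ h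
    rw [abs_of_nonpos (by linarith)]
    have : z₁ - y₁ ≤ -(y₀ - z₀ - ε) := by nlinarith
    calc -(y₁ - z₁) = z₁ - y₁ := by ring
    _ ≤ -(y₀ - z₀ - ε) := this
    _ ≤ |y₀ - z₀ - ε| := neg_le_abs _
  · have hm : z₁ ^ (-γ) ≥ y₁ ^ (-γ) := key z₁ y₁ hz₁ h
    rw [abs_of_nonneg (by linarith)]
    have : y₁ - z₁ ≤ y₀ - z₀ - ε := by nlinarith
    exact this.trans (le_abs_self _)
end

section
/- The implicit Euler approximation y^n (piecewise-linearly interpolated) converges uniformly on [0,T] to the solution y of y_t = y₀ + a(1-β)∫₀ᵗ y_s^{-γ}e^{bs}ds + w̃_t, with rate n^{-α·min(1,γ)}: there is a constant C (depending on a, b, β, T, α, ‖w̃‖_{α-Höl}, ‖y‖_{α-Höl}, min_{[0,T]} y) such that ‖yⁿ - y‖_{∞;[0,T]} ≤ C n^{-α min(1,γ)} for all sufficiently large n. -/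
/-!
Write `h = T/n`, `tₖ = k h` and `F(s, x) = a(1-β) x^{-γ} e^{bs}`. As `x ↦ F(s, x)` is nonincreasing
on `(0, ∞)`, the implicit Euler step does not amplify errors: subtracting the integral equation on
`[tₖ, tₖ₊₁]` from the scheme, the error `eₖ = Yₖ - y(tₖ)` satisfies `|eₖ₊₁| ≤ |eₖ| + |rₖ|`, where `rₖ`
is the error of the right-endpoint rule for `∫ F(s, y s) ds` over `[tₖ, tₖ₊₁]`. The integral
equation makes `y` `α`-Hölder, and since `y ≥ min y > 0` so is `s ↦ F(s, y s)`; hence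
`|rₖ| ≲ h^{1+α}` and `|eₖ| ≲ n h^{1+α} ≍ h^α`. Between grid points the interpolant is a convex
combination of two grid values, each within `O(h^α)` of `y t`. This gives the rate `n^{-α}`, which
is at least as good as `n^{-α min(1,γ)}`.
-/

open Real Set intervalIntegral MeasureTheory
open scoped Interval

/-- Hölder continuity with real constant and exponent (Mathlib's `HolderOnWith` uses `ℝ≥0`). -/
def IsHolderOn (C α : ℝ) (f : ℝ → ℝ) (s : Set ℝ) : Prop :=
  ∀ x ∈ s, ∀ y ∈ s, |f y - f x| ≤ C * |y - x| ^ α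

namespace IsHolderOn

variable {C C' α : ℝ} {f g : ℝ → ℝ} {s : Set ℝ}

lemma const_mul (hf : IsHolderOn C α f s) (c : ℝ) :
    IsHolderOn (|c| * C) α (fun x => c * f x) s := fun x hx y hy => by
  rw [← mul_sub, abs_mul, mul_assoc]
  exact mul_le_mul_of_nonneg_left (hf x hx y hy) (abs_nonneg c)

lemma mul {A B : ℝ} (hf : IsHolderOn C α f s) (hg : IsHolderOn C' α g s)
    (hfA : ∀ x ∈ s, |f x| ≤ A) (hgB : ∀ x ∈ s, |g x| ≤ B) :
    IsHolderOn (A * C' + B * C) α (fun x => f x * g x) s := fun x hx y hy => by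
  have hsplit : f y * g y - f x * g x = f y * (g y - g x) + g x * (f y - f x) := by ring
  have hA : 0 ≤ A := (abs_nonneg _).trans (hfA x hx)
  have hB : 0 ≤ B := (abs_nonneg _).trans (hgB x hx)
  calc |f y * g y - f x * g x| ≤ |f y| * |g y - g x| + |g x| * |f y - f x| := by
        rw [hsplit, ← abs_mul, ← abs_mul]; exact abs_add_le _ _
    _ ≤ A * (C' * |y - x| ^ α) + B * (C * |y - x| ^ α) := by
        gcongr
        exacts [hfA y hy, hg x hx y hy, hgB x hx, hf x hx y hy]
    _ = (A * C' + B * C) * |y - x| ^ α := by ring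

lemma comp_lipschitzOn {φ : ℝ → ℝ} {t : Set ℝ} {L : ℝ} (hL : 0 ≤ L)
    (hφ : ∀ u ∈ t, ∀ v ∈ t, |φ v - φ u| ≤ L * |v - u|) (hf : IsHolderOn C α f s)
    (hst : MapsTo f s t) : IsHolderOn (L * C) α (fun x => φ (f x)) s := fun x hx y hy => by
  calc |φ (f y) - φ (f x)| ≤ L * |f y - f x| := hφ _ (hst hx) _ (hst hy)
    _ ≤ L * (C * |y - x| ^ α) := mul_le_mul_of_nonneg_left (hf x hx y hy) hL
    _ = L * C * |y - x| ^ α := by ring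

lemma mono {t : Set ℝ} (hf : IsHolderOn C α f s) (hts : t ⊆ s) : IsHolderOn C α f t :=
  fun x hx y hy => hf x (hts hx) y (hts hy)

end IsHolderOn

lemma le_rpow_mul_rpow_of_le {x D α : ℝ} (hx : 0 ≤ x) (hxD : x ≤ D) (hα : α ≤ 1) :
    x ≤ D ^ (1 - α) * x ^ α := by
  calc x = x ^ (1 - α) * x ^ α := by rw [← rpow_add' hx (by norm_num), sub_add_cancel, rpow_one]
    _ ≤ D ^ (1 - α) * x ^ α := by gcongr

lemma isHolderOn_Icc_of_lipschitzOn {f : ℝ → ℝ} {p q L α : ℝ} (hL : 0 ≤ L) (hα : α ≤ 1)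
    (hf : ∀ x ∈ Icc p q, ∀ y ∈ Icc p q, |f y - f x| ≤ L * |y - x|) :
    IsHolderOn (L * (q - p) ^ (1 - α)) α f (Icc p q) := fun x hx y hy => by
  have hyx : |y - x| ≤ q - p :=
    abs_sub_le_iff.2 ⟨by linarith [hx.1, hy.2], by linarith [hx.2, hy.1]⟩
  calc |f y - f x| ≤ L * |y - x| := hf x hx y hy
    _ ≤ L * ((q - p) ^ (1 - α) * |y - x| ^ α) := by
        gcongr; exact le_rpow_mul_rpow_of_le (abs_nonneg _) hyx hα
    _ = L * (q - p) ^ (1 - α) * |y - x| ^ α := by ring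

lemma abs_rpow_neg_sub_rpow_neg_le {γ m x z : ℝ} (hγ : 0 ≤ γ) (hm : 0 < m)
    (hx : m ≤ x) (hz : m ≤ z) :
    |z ^ (-γ) - x ^ (-γ)| ≤ γ * m ^ (-γ - 1) * |z - x| := by
  have hderiv : ∀ u ∈ Ici m, HasDerivWithinAt (fun v : ℝ => v ^ (-γ))
      (-γ * u ^ (-γ - 1)) (Ici m) u := fun u hu =>
    (hasDerivAt_rpow_const (Or.inl (hm.trans_le hu).ne')).hasDerivWithinAt
  have hbound : ∀ u ∈ Ici m, ‖-γ * u ^ (-γ - 1)‖ ≤ γ * m ^ (-γ - 1) := fun u hu => by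
    rw [norm_mul, norm_neg, norm_of_nonneg hγ, norm_of_nonneg (rpow_nonneg (hm.le.trans hu) _)]
    exact mul_le_mul_of_nonneg_left (rpow_le_rpow_of_nonpos hm hu (by linarith)) hγ
  simpa only [norm_eq_abs] using
    (convex_Ici m).norm_image_sub_le_of_norm_hasDerivWithin_le hderiv hbound hx hz

lemma abs_exp_sub_exp_le {M u v : ℝ} (hu : u ≤ M) (hv : v ≤ M) :
    |exp v - exp u| ≤ exp M * |v - u| := by
  have hbound : ∀ x ∈ Iic M, ‖exp x‖ ≤ exp M := fun x hx => by
    rw [norm_of_nonneg (exp_pos x).le]; exact exp_le_exp.2 hx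
  simpa only [norm_eq_abs] using (convex_Iic M).norm_image_sub_le_of_norm_hasDerivWithin_le
    (fun x _ => (hasDerivAt_exp x).hasDerivWithinAt) hbound hu hv

lemma abs_sub_mul_sub_integral_le {f : ℝ → ℝ} {L α s t : ℝ} (hL : 0 ≤ L) (hα : 0 ≤ α)
    (hst : s ≤ t) (hf : IsHolderOn L α f (Icc s t)) (hint : IntervalIntegrable f volume s t) :
    |(t - s) * f t - ∫ u in s..t, f u| ≤ L * (t - s) ^ α * (t - s) := by
  have hrw : (t - s) * f t - ∫ u in s..t, f u = ∫ u in s..t, (f t - f u) := by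
    rw [integral_sub intervalIntegrable_const hint, intervalIntegral.integral_const, smul_eq_mul]
  have hbound : ∀ u ∈ Ι s t, ‖f t - f u‖ ≤ L * (t - s) ^ α := fun u hu => by
    rw [uIoc_of_le hst] at hu
    have hu' : u ∈ Icc s t := Ioc_subset_Icc_self hu
    calc ‖f t - f u‖ ≤ L * |t - u| ^ α := hf u hu' t (right_mem_Icc.2 hst)
      _ ≤ L * (t - s) ^ α := by
          gcongr
          rw [abs_of_nonneg (by linarith [hu.2])]
          linarith [hu.1]
  simpa only [hrw, norm_eq_abs, abs_of_nonneg (sub_nonneg.2 hst)] using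
    norm_integral_le_of_norm_le_const hbound

lemma abs_le_abs_add_abs_of_mul_nonpos {e e' d u v r : ℝ} (hd : 0 ≤ d)
    (huv : (u - v) * e' ≤ 0) (he' : e' = e + d * (u - v) + r) : |e'| ≤ |e| + |r| := by
  rcases lt_trichotomy e' 0 with h | h | h
  · have : 0 ≤ u - v := by nlinarith
    rw [abs_of_neg h]
    nlinarith [neg_abs_le e, neg_abs_le r]
  · rw [h, abs_zero]; positivity
  · have : u - v ≤ 0 := by nlinarith
    rw [abs_of_pos h]
    nlinarith [le_abs_self e, le_abs_self r]

lemma AntitoneOn.sub_mul_sub_nonpos {f : ℝ → ℝ} {S : Set ℝ} (hf : AntitoneOn f S)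
    {a b : ℝ} (ha : a ∈ S) (hb : b ∈ S) : (f a - f b) * (a - b) ≤ 0 := by
  rcases le_total a b with h | h
  · exact mul_nonpos_of_nonneg_of_nonpos (sub_nonneg.2 (hf ha hb h)) (sub_nonpos.2 h)
  · exact mul_nonpos_of_nonpos_of_nonneg (sub_nonpos.2 (hf hb ha h)) (sub_nonneg.2 h)

theorem abs_implicitEuler_sub_le {F : ℝ → ℝ → ℝ} {S : Set ℝ} {y w : ℝ → ℝ} {Y t : ℕ → ℝ}
    {n : ℕ} {B : ℝ} (hF : ∀ s, AntitoneOn (F s) S) (hYS : ∀ k ≤ n, Y k ∈ S)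
    (hyS : ∀ k ≤ n, y (t k) ∈ S) (ht : ∀ k < n, t k ≤ t (k + 1))
    (hY : ∀ k < n, Y (k + 1) =
      Y k + (t (k + 1) - t k) * F (t (k + 1)) (Y (k + 1)) + (w (t (k + 1)) - w (t k)))
    (hy : ∀ k < n, y (t (k + 1)) =
      y (t k) + (∫ s in t k..t (k + 1), F s (y s)) + (w (t (k + 1)) - w (t k)))
    (htrunc : ∀ k < n, |(t (k + 1) - t k) * F (t (k + 1)) (y (t (k + 1)))
      - ∫ s in t k..t (k + 1), F s (y s)| ≤ B) :
    ∀ k ≤ n, |Y k - y (t k)| ≤ |Y 0 - y (t 0)| + k * B := by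
  intro k
  induction k with
  | zero => intro _; simp
  | succ k ih =>
    intro hk
    have hstep := abs_le_abs_add_abs_of_mul_nonpos (e := Y k - y (t k))
      (r := (t (k + 1) - t k) * F (t (k + 1)) (y (t (k + 1))) - ∫ s in t k..t (k + 1), F s (y s))
      (sub_nonneg.2 (ht k hk)) ((hF (t (k + 1))).sub_mul_sub_nonpos (hYS _ hk) (hyS _ hk))
      (by linear_combination hY k hk - hy k hk)
    push_cast
    linarith [ih (Nat.le_of_succ_le hk), htrunc k hk]

lemma abs_add_sub_mul_sub_le {x₀ x₁ z θ D : ℝ} (hθ : θ ∈ Icc (0 : ℝ) 1)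
    (h₀ : |x₀ - z| ≤ D) (h₁ : |x₁ - z| ≤ D) : |x₀ + (x₁ - x₀) * θ - z| ≤ D := by
  have hsplit : x₀ + (x₁ - x₀) * θ - z = (1 - θ) * (x₀ - z) + θ * (x₁ - z) := by ring
  calc |x₀ + (x₁ - x₀) * θ - z| ≤ (1 - θ) * |x₀ - z| + θ * |x₁ - z| := by
        rw [hsplit]
        refine (abs_add_le _ _).trans_eq ?_
        rw [abs_mul, abs_mul, abs_of_nonneg (sub_nonneg.2 hθ.2), abs_of_nonneg hθ.1]
    _ ≤ (1 - θ) * D + θ * D := by gcongr; linarith [hθ.2]; exact hθ.1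
    _ = D := by ring

lemma exists_lt_mem_Ico_grid {T t : ℝ} {n : ℕ} (hn : 0 < n) (ht : t ∈ Ico 0 T) :
    ∃ k < n, t ∈ Ico ((k : ℝ) * T / n) (((k + 1 : ℕ) : ℝ) * T / n) := by
  have hT : 0 < T := ht.1.trans_lt ht.2
  have hh : 0 < T / n := by positivity
  refine ⟨⌊t / (T / n)⌋₊, ?_, ?_⟩
  · refine (Nat.floor_lt (div_nonneg ht.1 hh.le)).2 ?_
    rw [div_lt_iff₀ hh]; field_simp; exact ht.2
  · have h1 := Nat.floor_le (div_nonneg ht.1 hh.le)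
    have h2 := Nat.lt_floor_add_one (t / (T / n))
    rw [le_div_iff₀ hh] at h1
    rw [div_lt_iff₀ hh] at h2
    constructor
    · calc _ = (⌊t / (T / n)⌋₊ : ℝ) * (T / n) := by ring
        _ ≤ t := h1
    · push_cast
      calc t < _ := h2
        _ = _ := by ring

lemma natCast_mul_div_mem_Icc {T : ℝ} {n k : ℕ} (hT : 0 ≤ T) (hk : k ≤ n) :
    (k : ℝ) * T / n ∈ Icc 0 T := by
  refine ⟨by positivity, div_le_of_le_mul₀ (Nat.cast_nonneg n) hT ?_⟩
  rw [mul_comm T]; gcongr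

lemma abs_interp_sub_le {T C α E : ℝ} {n : ℕ} {y yI : ℝ → ℝ} {Y : ℕ → ℝ} (hα : 0 ≤ α)
    (hC : 0 ≤ C) (hn : 0 < n) (hy : IsHolderOn C α y (Icc 0 T))
    (hgrid : ∀ k ≤ n, |Y k - y (k * T / n)| ≤ E)
    (hinterp : ∀ k < n, ∀ t ∈ Ico ((k : ℝ) * T / n) (((k + 1 : ℕ) : ℝ) * T / n),
      yI t = Y k + (Y (k + 1) - Y k) * (t - k * T / n) / (T / n))
    (hinterpT : yI T = Y n) :
    ∀ t ∈ Icc 0 T, |yI t - y t| ≤ E + C * (T / n) ^ α := by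
  intro t ht
  have hT : 0 ≤ T := ht.1.trans ht.2
  have hnR : (0 : ℝ) < n := Nat.cast_pos.2 hn
  have hCh : 0 ≤ C * (T / n) ^ α := by positivity
  rcases ht.2.eq_or_lt with rfl | htT
  · have hnT : (n : ℝ) * t / n = t := by field_simp
    rw [hinterpT]
    linarith [hnT ▸ hgrid n le_rfl]
  obtain ⟨k, hkn, hk⟩ := exists_lt_mem_Ico_grid hn ⟨ht.1, htT⟩
  have hh : 0 < T / n := div_pos (ht.1.trans_lt htT) hnR
  have hstep : ((k + 1 : ℕ) : ℝ) * T / n - k * T / n = T / n := by push_cast; ring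
  have hnear : ∀ i ≤ n, |(i : ℝ) * T / n - t| ≤ T / n → |Y i - y t| ≤ E + C * (T / n) ^ α :=
    fun i hi hd => calc
      |Y i - y t| ≤ |Y i - y (i * T / n)| + |y (i * T / n) - y t| := abs_sub_le _ _ _
      _ ≤ E + C * |(i : ℝ) * T / n - t| ^ α :=
          add_le_add (hgrid i hi) (hy t ht _ (natCast_mul_div_mem_Icc hT hi))
      _ ≤ E + C * (T / n) ^ α := by gcongr
  have hθ : (t - k * T / n) / (T / n) ∈ Icc (0 : ℝ) 1 :=
    ⟨div_nonneg (sub_nonneg.2 hk.1) hh.le, (div_le_one hh).2 (by linarith [hk.2])⟩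
  rw [hinterp k hkn t hk, mul_div_assoc]
  refine abs_add_sub_mul_sub_le hθ (hnear k hkn.le ?_) (hnear (k + 1) hkn ?_) <;>
    rw [abs_le] <;> constructor <;> linarith [hk.1, hk.2]

lemma isHolderOn_of_eq_add_integral {y w f : ℝ → ℝ} {y₀ T M Cw α : ℝ} (hα : α ≤ 1)
    (hf : ContinuousOn f (Icc 0 T)) (hfM : ∀ s ∈ Icc 0 T, |f s| ≤ M)
    (hw : IsHolderOn Cw α w (Icc 0 T))
    (heq : ∀ t ∈ Icc 0 T, y t = y₀ + (∫ s in (0 : ℝ)..t, f s) + w t) :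
    IsHolderOn (M * T ^ (1 - α) + Cw) α y (Icc 0 T) := by
  intro s hs t ht
  have hM : 0 ≤ M := (abs_nonneg _).trans (hfM s hs)
  have hint : ∀ u ∈ Icc 0 T, IntervalIntegrable f volume 0 u := fun u hu =>
    (hf.mono (uIcc_subset_Icc (left_mem_Icc.2 (hs.1.trans hs.2)) hu)).intervalIntegrable
  have hF : IsHolderOn (M * T ^ (1 - α)) α (fun u => ∫ v in (0 : ℝ)..u, f v) (Icc 0 T) := by
    have h := isHolderOn_Icc_of_lipschitzOn (f := fun u => ∫ v in (0 : ℝ)..u, f v) hM hα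
      fun u hu v hv => by
        rw [integral_interval_sub_left (hint v hv) (hint u hu)]
        exact intervalIntegral.norm_integral_le_of_norm_le_const (f := f) fun x hx =>
          hfM x (uIcc_subset_Icc hu hv (uIoc_subset_uIcc hx))
    rwa [sub_zero] at h
  calc |y t - y s| = |((∫ v in (0 : ℝ)..t, f v) - ∫ v in (0 : ℝ)..s, f v) + (w t - w s)| := by
        rw [heq t ht, heq s hs]; ring_nf
    _ ≤ M * T ^ (1 - α) * |t - s| ^ α + Cw * |t - s| ^ α :=
        (abs_add_le _ _).trans (add_le_add (hF s hs t ht) (hw s hs t ht))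
    _ = (M * T ^ (1 - α) + Cw) * |t - s| ^ α := by ring

lemma abs_mul_rpow_neg_mul_exp_le {c γ m x b s T : ℝ} (hc : 0 ≤ c) (hγ : 0 ≤ γ) (hm : 0 < m)
    (hx : m ≤ x) (hb : 0 ≤ b) (hs : s ≤ T) :
    |c * (x ^ (-γ) * exp (b * s))| ≤ c * (m ^ (-γ) * exp (b * T)) := by
  have hx0 : 0 < x := hm.trans_le hx
  rw [abs_of_nonneg (by positivity)]
  exact mul_le_mul_of_nonneg_left (mul_le_mul (rpow_le_rpow_of_nonpos hm hx (by linarith))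
    (exp_le_exp.2 (mul_le_mul_of_nonneg_left hs hb)) (exp_pos _).le (by positivity)) hc

lemma exists_isHolderOn_rpow_neg_mul_exp {y : ℝ → ℝ} {T m γ b c α Cy : ℝ} (hγ : 0 ≤ γ)
    (hm : 0 < m) (hb : 0 ≤ b) (hα : α ≤ 1) (hCy : 0 ≤ Cy) (hT : 0 ≤ T)
    (hym : ∀ s ∈ Icc 0 T, m ≤ y s) (hy : IsHolderOn Cy α y (Icc 0 T)) :
    ∃ L, 0 ≤ L ∧ IsHolderOn L α (fun s => c * (y s ^ (-γ) * exp (b * s))) (Icc 0 T) := by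
  have hexp_le : ∀ s ∈ Icc 0 T, exp (b * s) ≤ exp (b * T) := fun s hs =>
    exp_le_exp.2 (mul_le_mul_of_nonneg_left hs.2 hb)
  have hpow : IsHolderOn (γ * m ^ (-γ - 1) * Cy) α (fun s => y s ^ (-γ)) (Icc 0 T) :=
    hy.comp_lipschitzOn (by positivity)
      (fun u hu v hv => abs_rpow_neg_sub_rpow_neg_le hγ hm hu hv) fun s hs => hym s hs
  have hexp : IsHolderOn (exp (b * T) * b * T ^ (1 - α)) α (fun s => exp (b * s)) (Icc 0 T) := by
    have h := isHolderOn_Icc_of_lipschitzOn (f := fun s => exp (b * s)) (L := exp (b * T) * b)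
      (by positivity) hα fun u hu v hv => calc
        |exp (b * v) - exp (b * u)| ≤ exp (b * T) * |b * v - b * u| :=
          abs_exp_sub_exp_le (exp_le_exp.1 (hexp_le u hu)) (exp_le_exp.1 (hexp_le v hv))
        _ = exp (b * T) * b * |v - u| := by rw [← mul_sub, abs_mul, abs_of_nonneg hb, mul_assoc]
    rwa [sub_zero] at h
  have hprod := (hpow.mul hexp (A := m ^ (-γ)) (B := exp (b * T))
    (fun s hs => by
      rw [abs_of_nonneg (rpow_nonneg (hm.le.trans (hym s hs)) _)]
      exact rpow_le_rpow_of_nonpos hm (hym s hs) (by linarith))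
    (fun s hs => by rw [abs_of_pos (exp_pos _)]; exact hexp_le s hs)).const_mul c
  exact ⟨_, by positivity, hprod⟩

lemma abs_implicitEuler_grid_sub_le {T c γ b L α y₀ : ℝ} {n : ℕ} {y w : ℝ → ℝ} {Y : ℕ → ℝ}
    (hc : 0 ≤ c) (hγ : 0 ≤ γ) (hL : 0 ≤ L) (hα : 0 ≤ α) (hT : 0 ≤ T) (hn : 0 < n)
    (hypos : ∀ t ∈ Icc 0 T, 0 < y t) (hYpos : ∀ k ≤ n, 0 < Y k) (hY0 : Y 0 = y 0)
    (hrec : ∀ k < n, Y (k + 1) = Y k + (c * T / n) * Y (k + 1) ^ (-γ)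
      * exp (b * ((k + 1 : ℕ) * T / n)) + w ((k + 1 : ℕ) * T / n) - w ((k : ℕ) * T / n))
    (hf : ContinuousOn (fun s => c * (y s ^ (-γ) * exp (b * s))) (Icc 0 T))
    (hfHol : IsHolderOn L α (fun s => c * (y s ^ (-γ) * exp (b * s))) (Icc 0 T))
    (heq : ∀ t ∈ Icc 0 T,
      y t = y₀ + (∫ s in (0 : ℝ)..t, c * (y s ^ (-γ) * exp (b * s))) + w t) :
    ∀ k ≤ n, |Y k - y (k * T / n)| ≤ L * (T / n) ^ α * T := by
  have hnR : (0 : ℝ) < n := Nat.cast_pos.2 hn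
  have hmem : ∀ k ≤ n, (k : ℝ) * T / n ∈ Icc 0 T := fun k hk => natCast_mul_div_mem_Icc hT hk
  have hstep : ∀ k : ℕ, ((k + 1 : ℕ) : ℝ) * T / n - k * T / n = T / n := fun k => by
    push_cast; ring
  have hmono : ∀ k : ℕ, (k : ℝ) * T / n ≤ ((k + 1 : ℕ) : ℝ) * T / n := fun k => by
    linarith [hstep k, div_nonneg hT hnR.le]
  have hint : ∀ u ∈ Icc 0 T, ∀ v ∈ Icc 0 T,
      IntervalIntegrable (fun s => c * (y s ^ (-γ) * exp (b * s))) volume u v :=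
    fun u hu v hv => (hf.mono (uIcc_subset_Icc hu hv)).intervalIntegrable
  have hanti : ∀ s, AntitoneOn (fun x : ℝ => c * (x ^ (-γ) * exp (b * s))) (Ioi 0) :=
    fun s x hx z _ hxz => mul_le_mul_of_nonneg_left
      (mul_le_mul_of_nonneg_right (rpow_le_rpow_of_nonpos hx hxz (by linarith)) (exp_pos _).le) hc
  intro k hk
  have herr := abs_implicitEuler_sub_le (t := fun k : ℕ => (k : ℝ) * T / n) (w := w)
    (B := L * (T / n) ^ α * (T / n)) hanti hYpos (fun k hk => hypos _ (hmem k hk))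
    (fun k _ => hmono k)
    (fun k hk => by rw [hstep]; linear_combination hrec k hk)
    (fun k hk => by
      rw [heq _ (hmem (k + 1) hk), heq _ (hmem k hk.le),
        ← integral_interval_sub_left (hint 0 (left_mem_Icc.2 hT) _ (hmem (k + 1) hk))
          (hint 0 (left_mem_Icc.2 hT) _ (hmem _ hk.le))]
      ring)
    (fun k hk => by
      have := abs_sub_mul_sub_integral_le hL hα (hmono k)
        (hfHol.mono (Icc_subset_Icc (hmem k hk.le).1 (hmem (k + 1) hk).2))
        (hint _ (hmem k hk.le) _ (hmem (k + 1) hk))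
      simpa only [hstep] using this) k hk
  simp only [Nat.cast_zero, zero_mul, zero_div, hY0, sub_self, abs_zero, zero_add] at herr
  calc _ ≤ k * (L * (T / n) ^ α * (T / n)) := herr
    _ ≤ n * (L * (T / n) ^ α * (T / n)) := by gcongr
    _ = L * (T / n) ^ α * T := by field_simp

lemma div_natCast_rpow_le {T α μ : ℝ} {n : ℕ} (hT : 0 ≤ T) (hα : 0 ≤ α) (hμ : μ ≤ 1)
    (hn : 0 < n) : (T / n) ^ α ≤ T ^ α * (n : ℝ) ^ (-(α * μ)) := by
  rw [div_rpow hT (Nat.cast_nonneg n), div_eq_mul_inv, ← rpow_neg (Nat.cast_nonneg n)]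
  gcongr
  · exact Nat.one_le_cast.2 hn
  · nlinarith

theorem stmt_14_general (T a b α β γ y₀ Cw : ℝ) (w y : ℝ → ℝ) (Y : ℕ → ℕ → ℝ) (yI : ℕ → ℝ → ℝ)
    (hT : 0 < T) (ha : 0 < a) (hb : 0 ≤ b)
    (hα : α ∈ Set.Ioc (0 : ℝ) 1) (hβ : β ∈ Set.Ioc (1 - α) 1) (hβ1 : β < 1)
    (hγ : γ = β / (1 - β))
    (hCw : 0 ≤ Cw)
    (hwHol : ∀ s ∈ Set.Icc (0 : ℝ) T, ∀ t ∈ Set.Icc (0 : ℝ) T,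
      |w t - w s| ≤ Cw * |t - s| ^ α)
    (hw0 : w 0 = 0)
    (hyc : ContinuousOn y (Set.Icc 0 T))
    (hypos : ∀ t ∈ Set.Icc (0 : ℝ) T, 0 < y t)
    (heq : ∀ t ∈ Set.Icc (0 : ℝ) T,
      y t = y₀ + a * (1 - β) * (∫ s in (0 : ℝ)..t, (y s) ^ (-γ) * Real.exp (b * s)) + w t)
    (hinit : ∀ n, Y n 0 = y₀)
    (hpos : ∀ n, ∀ k ≤ n, 0 < Y n k)
    (hrec : ∀ n, 0 < n → ∀ k < n,
      Y n (k + 1) = Y n k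
        + (a * (1 - β) * T / n) * (Y n (k + 1)) ^ (-γ)
            * Real.exp (b * ((k + 1 : ℕ) * T / n))
        + w ((k + 1 : ℕ) * T / n) - w ((k : ℕ) * T / n))
    (hinterp : ∀ n : ℕ, 0 < n → ∀ k : ℕ, k < n →
      ∀ t ∈ Set.Ico ((k : ℝ) * T / n) (((k + 1 : ℕ) : ℝ) * T / n),
        yI n t = Y n k + (Y n (k + 1) - Y n k) * (t - (k : ℝ) * T / n) / (T / n))
    (hinterpT : ∀ n, 0 < n → yI n T = Y n n) :
    ∃ C > (0 : ℝ), ∃ N : ℕ, ∀ n ≥ N, 0 < n →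
      ∀ t ∈ Set.Icc (0 : ℝ) T,
        |yI n t - y t| ≤ C * (n : ℝ) ^ (-(α * min 1 γ)) := by
  obtain ⟨hα0, hα1⟩ := hα
  have hγ0 : 0 ≤ γ := hγ ▸ div_nonneg (by linarith [hβ.1]) (by linarith)
  have hc : 0 ≤ a * (1 - β) := mul_nonneg ha.le (by linarith)
  obtain ⟨x₀, hx₀, hmin⟩ := isCompact_Icc.exists_isMinOn (nonempty_Icc.2 hT.le) hyc
  have hm : 0 < y x₀ := hypos x₀ hx₀
  set f : ℝ → ℝ := fun s => a * (1 - β) * (y s ^ (-γ) * exp (b * s))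
  have hfc : ContinuousOn f (Icc 0 T) := continuousOn_const.mul
    ((hyc.rpow_const fun s hs => Or.inl (hypos s hs).ne').mul (by fun_prop))
  have heq' : ∀ t ∈ Icc 0 T, y t = y₀ + (∫ s in (0 : ℝ)..t, f s) + w t := fun t ht => by
    rw [heq t ht, ← intervalIntegral.integral_const_mul]
  obtain ⟨Cy, hCy, hyHol⟩ : ∃ Cy, 0 ≤ Cy ∧ IsHolderOn Cy α y (Icc 0 T) :=
    ⟨_, by positivity, isHolderOn_of_eq_add_integral hα1 hfc
      (fun s hs => abs_mul_rpow_neg_mul_exp_le hc hγ0 hm (hmin hs) hb hs.2) hwHol heq'⟩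
  obtain ⟨L, hL, hfHol⟩ := exists_isHolderOn_rpow_neg_mul_exp (c := a * (1 - β)) hγ0 hm hb hα1
    hCy hT.le (fun s hs => hmin hs) hyHol
  refine ⟨(L * T + Cy) * T ^ α + 1, by positivity, 0, fun n _ hn t ht => ?_⟩
  have hY0 : Y n 0 = y 0 := by
    rw [hinit n, heq 0 (left_mem_Icc.2 hT.le), integral_same, hw0]; ring
  have hgrid := abs_implicitEuler_grid_sub_le hc hγ0 hL hα0.le hT.le hn hypos (hpos n) hY0
    (hrec n hn) hfc hfHol heq'
  calc |yI n t - y t| ≤ (L * T + Cy) * (T / n) ^ α :=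
        (abs_interp_sub_le hα0.le hCy hn hyHol hgrid (hinterp n hn) (hinterpT n hn) t ht).trans_eq
          (by ring)
    _ ≤ (L * T + Cy) * (T ^ α * (n : ℝ) ^ (-(α * min 1 γ))) := by
        gcongr; exact div_natCast_rpow_le hT.le hα0.le (min_le_left 1 γ) hn
    _ ≤ ((L * T + Cy) * T ^ α + 1) * (n : ℝ) ^ (-(α * min 1 γ)) := by
        rw [← mul_assoc]; gcongr; linarith

/-- The implicit Euler approximation (piecewise-linearly interpolated) converges
uniformly on `[0,T]` to the solution of `y_t = y₀ + a(1-β)∫₀ᵗ y_s^{-γ}e^{bs}ds + w̃_t`,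
with rate `n^{-α min(1,γ)}`. -/
theorem stmt_14 (T a b α β γ y₀ Cw : ℝ) (w y : ℝ → ℝ) (Y : ℕ → ℕ → ℝ) (yI : ℕ → ℝ → ℝ)
    (hT : 0 < T) (ha : 0 < a) (hb : 0 ≤ b)
    (hα : α ∈ Set.Ioc (0 : ℝ) 1) (hβ : β ∈ Set.Ioc (1 - α) 1) (hβ1 : β < 1)
    (hγ : γ = β / (1 - β)) (hy₀ : 0 < y₀)
    (hCw : 0 ≤ Cw)
    (hwHol : ∀ s ∈ Set.Icc (0 : ℝ) T, ∀ t ∈ Set.Icc (0 : ℝ) T,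
      |w t - w s| ≤ Cw * |t - s| ^ α)
    (hw0 : w 0 = 0)
    (hyc : ContinuousOn y (Set.Icc 0 T))
    (hypos : ∀ t ∈ Set.Icc (0 : ℝ) T, 0 < y t)
    (heq : ∀ t ∈ Set.Icc (0 : ℝ) T,
      y t = y₀ + a * (1 - β) * (∫ s in (0 : ℝ)..t, (y s) ^ (-γ) * Real.exp (b * s)) + w t)
    (hinit : ∀ n, Y n 0 = y₀)
    (hpos : ∀ n, ∀ k ≤ n, 0 < Y n k)
    (hrec : ∀ n, 0 < n → ∀ k < n,
      Y n (k + 1) = Y n k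
        + (a * (1 - β) * T / n) * (Y n (k + 1)) ^ (-γ)
            * Real.exp (b * ((k + 1 : ℕ) * T / n))
        + w ((k + 1 : ℕ) * T / n) - w ((k : ℕ) * T / n))
    (hinterp : ∀ n : ℕ, 0 < n → ∀ k : ℕ, k < n →
      ∀ t ∈ Set.Ico ((k : ℝ) * T / n) (((k + 1 : ℕ) : ℝ) * T / n),
        yI n t = Y n k + (Y n (k + 1) - Y n k) * (t - (k : ℝ) * T / n) / (T / n))
    (hinterpT : ∀ n, 0 < n → yI n T = Y n n) :
    ∃ C > (0 : ℝ), ∃ N : ℕ, ∀ n ≥ N, 0 < n →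
      ∀ t ∈ Set.Icc (0 : ℝ) T,
        |yI n t - y t| ≤ C * (n : ℝ) ^ (-(α * min 1 γ)) :=
  stmt_14_general T a b α β γ y₀ Cw w y Y yI hT ha hb hα hβ hβ1 hγ hCw hwHol hw0 hyc hypos heq hinit
    hpos hrec hinterp hinterpT
end

section
/- Continuity in (a,b): with x₀ > 0 fixed and w α-Hölder, the map (a,b) ↦ x(a,b) ∈ C⁰([0,T];ℝ) is continuous on (0,∞)², with the quantitative estimate ‖y(a,b) - y(a⁰,b⁰)‖_{∞;T} ≤ (1-β)T[|a-a⁰|e^{bT} + a⁰ e^{(b∨b⁰)T} T|b-b⁰|]·‖y^{-γ}(a⁰,b⁰)‖_{∞;T} + 2T^α ‖w̃ - w̃⁰‖_{α-Höl;T}, where w̃, w̃⁰ are the Young integrals of σ(1-β)e^{b(1-β)·} and σ(1-β)e^{b⁰(1-β)·} against w. -/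
open Real Set intervalIntegral

/-- The Young integral `w̃_b(t) = σ(1-β)∫₀ᵗ e^{b(1-β)s} dw_s`, expressed via
integration by parts (valid for continuous `w`). -/
noncomputable def wTilde (σ β b : ℝ) (w : ℝ → ℝ) (t : ℝ) : ℝ :=
  σ * (1 - β) * (Real.exp (b * (1 - β) * t) * w t - w 0
    - b * (1 - β) * ∫ u in (0 : ℝ)..t, Real.exp (b * (1 - β) * u) * w u)

/-- The α-Hölder seminorm of `f` on `[0,T]`. -/
noncomputable def holderSemi (α T : ℝ) (f : ℝ → ℝ) : ℝ :=
  sSup {c : ℝ | ∃ s ∈ Set.Icc (0 : ℝ) T, ∃ t ∈ Set.Icc (0 : ℝ) T,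
    s ≠ t ∧ c = |f t - f s| / |t - s| ^ α}

lemma abs_exp_sub_exp (u v : ℝ) :
    |Real.exp u - Real.exp v| ≤ Real.exp (max u v) * |u - v| := by
  have key : ∀ p q : ℝ, q ≤ p → Real.exp p - Real.exp q ≤ Real.exp p * (p - q) := by
    intro p q hqp
    have h1 : (q - p) + 1 ≤ Real.exp (q - p) := Real.add_one_le_exp _
    have h2 : Real.exp p * ((q - p) + 1) ≤ Real.exp p * Real.exp (q - p) :=
      mul_le_mul_of_nonneg_left h1 (Real.exp_pos p).le
    rw [← Real.exp_add] at h2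
    have h3 : p + (q - p) = q := by ring
    rw [h3] at h2
    nlinarith
  rcases le_total v u with h | h
  · rw [abs_of_nonneg (sub_nonneg.2 (Real.exp_le_exp.2 h)), max_eq_left h,
      abs_of_nonneg (sub_nonneg.2 h)]
    exact key u v h
  · rw [abs_of_nonpos (sub_nonpos.2 (Real.exp_le_exp.2 h)), max_eq_right h,
      abs_of_nonpos (sub_nonpos.2 h)]
    have := key v u h
    linarith

set_option maxHeartbeats 2000000 in
/-- Quantitative continuity of the solution in the parameters `(a,b)`:
`‖y(a,b) - y(a⁰,b⁰)‖_∞ ≤ (1-β)T[|a-a⁰|e^{bT} + a⁰e^{(b∨b⁰)T}T|b-b⁰|]‖y^{-γ}(a⁰,b⁰)‖_∞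
  + 2T^α ‖w̃ - w̃⁰‖_{α-Höl;T}`. -/
theorem stmt_18 (T a a₀ b b₀ σ α β γ x₀ : ℝ) (w y y₀ : ℝ → ℝ)
    (hT : 0 < T) (ha : 0 < a) (ha₀ : 0 < a₀) (hb : 0 < b) (hb₀ : 0 < b₀) (hσ : 0 ≤ σ)
    (hα : α ∈ Set.Ioc (0 : ℝ) 1) (hβ : β ∈ Set.Ioc (1 - α) 1) (hβ1 : β < 1)
    (hγ : γ = β / (1 - β)) (hx₀ : 0 < x₀)
    (hwc : ContinuousOn w (Set.Icc 0 T))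
    (hyc : ContinuousOn y (Set.Icc 0 T)) (hy₀c : ContinuousOn y₀ (Set.Icc 0 T))
    (hypos : ∀ t ∈ Set.Icc (0 : ℝ) T, 0 < y t)
    (hy₀pos : ∀ t ∈ Set.Icc (0 : ℝ) T, 0 < y₀ t)
    (heq : ∀ t ∈ Set.Icc (0 : ℝ) T,
      y t = x₀ ^ (1 - β)
        + a * (1 - β) * (∫ s in (0 : ℝ)..t, (y s) ^ (-γ) * Real.exp (b * s))
        + wTilde σ β b w t)
    (heq₀ : ∀ t ∈ Set.Icc (0 : ℝ) T,
      y₀ t = x₀ ^ (1 - β)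
        + a₀ * (1 - β) * (∫ s in (0 : ℝ)..t, (y₀ s) ^ (-γ) * Real.exp (b₀ * s))
        + wTilde σ β b₀ w t)
    (hbdd : BddAbove {c : ℝ | ∃ s ∈ Set.Icc (0 : ℝ) T, ∃ t ∈ Set.Icc (0 : ℝ) T,
      s ≠ t ∧ c = |(wTilde σ β b w t - wTilde σ β b₀ w t)
        - (wTilde σ β b w s - wTilde σ β b₀ w s)| / |t - s| ^ α}) :
    ∀ t ∈ Set.Icc (0 : ℝ) T,
      |y t - y₀ t|
        ≤ (1 - β) * T * (|a - a₀| * Real.exp (b * T)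
              + a₀ * Real.exp (max b b₀ * T) * T * |b - b₀|)
            * sSup ((fun s => (y₀ s) ^ (-γ)) '' Set.Icc 0 T)
          + 2 * T ^ α * holderSemi α T (fun t => wTilde σ β b w t - wTilde σ β b₀ w t) := by
  have hα0 : 0 < α := hα.1
  have hβpos : 0 < β := by have h1 := hβ.1; have h2 := hα.2; linarith
  have h1β : 0 < 1 - β := by linarith
  have hγ0 : 0 < γ := by rw [hγ]; positivity
  -- continuity facts
  have hyγ : ContinuousOn (fun s => (y s) ^ (-γ)) (Icc 0 T) :=
    hyc.rpow_const (fun x hx => Or.inl (hypos x hx).ne')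
  have hy₀γ : ContinuousOn (fun s => (y₀ s) ^ (-γ)) (Icc 0 T) :=
    hy₀c.rpow_const (fun x hx => Or.inl (hy₀pos x hx).ne')
  have hF : ContinuousOn (fun s => (y s) ^ (-γ) * Real.exp (b * s)) (Icc 0 T) :=
    hyγ.mul ((Real.continuous_exp.comp (continuous_const.mul continuous_id)).continuousOn)
  have hF₀ : ContinuousOn (fun s => (y₀ s) ^ (-γ) * Real.exp (b₀ * s)) (Icc 0 T) :=
    hy₀γ.mul ((Real.continuous_exp.comp (continuous_const.mul continuous_id)).continuousOn)
  -- S facts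
  set S := sSup ((fun s => (y₀ s) ^ (-γ)) '' Set.Icc 0 T) with hSdef
  have hSbdd : BddAbove ((fun s => (y₀ s) ^ (-γ)) '' Set.Icc 0 T) :=
    (isCompact_Icc.image_of_continuousOn hy₀γ).bddAbove
  have hS : ∀ s ∈ Icc (0:ℝ) T, (y₀ s) ^ (-γ) ≤ S := fun s hs => le_csSup hSbdd ⟨s, hs, rfl⟩
  have hS0 : 0 ≤ S :=
    le_trans (Real.rpow_nonneg (hy₀pos 0 ⟨le_refl 0, hT.le⟩).le _) (hS 0 ⟨le_refl 0, hT.le⟩)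
  -- C facts
  set C := |a - a₀| * Real.exp (b * T) + a₀ * Real.exp (max b b₀ * T) * T * |b - b₀| with hCdef
  have hC0 : 0 ≤ C := by positivity
  have hC : ∀ s ∈ Icc (0:ℝ) T, |a * Real.exp (b * s) - a₀ * Real.exp (b₀ * s)| ≤ C := by
    intro s hs
    have h1 : |a * Real.exp (b*s) - a₀ * Real.exp (b₀*s)|
        ≤ |a - a₀| * Real.exp (b*s) + a₀ * |Real.exp (b*s) - Real.exp (b₀*s)| := by
      have hrw : a * Real.exp (b*s) - a₀ * Real.exp (b₀*s)
          = (a - a₀) * Real.exp (b*s) + a₀ * (Real.exp (b*s) - Real.exp (b₀*s)) := by ring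
      rw [hrw]
      refine (abs_add_le _ _).trans ?_
      rw [abs_mul, abs_mul, abs_of_pos (Real.exp_pos _), abs_of_pos ha₀]
    have h2 : Real.exp (b*s) ≤ Real.exp (b*T) :=
      Real.exp_le_exp.2 (mul_le_mul_of_nonneg_left hs.2 hb.le)
    have h3 : |Real.exp (b*s) - Real.exp (b₀*s)| ≤ Real.exp (max b b₀ * T) * (|b - b₀| * T) := by
      refine (abs_exp_sub_exp _ _).trans ?_
      have hmax : max (b*s) (b₀*s) = max b b₀ * s := (max_mul_of_nonneg _ _ hs.1).symm
      have h4 : |b * s - b₀ * s| = |b - b₀| * s := by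
        rw [← sub_mul, abs_mul, abs_of_nonneg hs.1]
      rw [hmax, h4]
      have h5 : Real.exp (max b b₀ * s) ≤ Real.exp (max b b₀ * T) :=
        Real.exp_le_exp.2 (mul_le_mul_of_nonneg_left hs.2 (le_max_of_le_left hb.le))
      have h6 : |b - b₀| * s ≤ |b - b₀| * T := mul_le_mul_of_nonneg_left hs.2 (abs_nonneg _)
      have h7 : (0:ℝ) ≤ |b - b₀| * s := mul_nonneg (abs_nonneg _) hs.1
      nlinarith [Real.exp_pos (max b b₀ * s), Real.exp_pos (max b b₀ * T)]
    have h8 : |a - a₀| * Real.exp (b*s) ≤ |a - a₀| * Real.exp (b*T) :=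
      mul_le_mul_of_nonneg_left h2 (abs_nonneg _)
    have h9 : a₀ * |Real.exp (b*s) - Real.exp (b₀*s)|
        ≤ a₀ * (Real.exp (max b b₀ * T) * (|b - b₀| * T)) :=
      mul_le_mul_of_nonneg_left h3 ha₀.le
    have hCeq : C = |a - a₀| * Real.exp (b * T)
        + a₀ * (Real.exp (max b b₀ * T) * (|b - b₀| * T)) := by rw [hCdef]; ring
    rw [hCeq]; linarith
  -- Hölder facts
  have hbdd' : BddAbove {c : ℝ | ∃ s ∈ Set.Icc (0 : ℝ) T, ∃ t ∈ Set.Icc (0 : ℝ) T,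
      s ≠ t ∧ c = |(fun t => wTilde σ β b w t - wTilde σ β b₀ w t) t
        - (fun t => wTilde σ β b w t - wTilde σ β b₀ w t) s| / |t - s| ^ α} := hbdd
  set H := holderSemi α T (fun t => wTilde σ β b w t - wTilde σ β b₀ w t) with hHdef
  have hTα : (0:ℝ) < T ^ α := Real.rpow_pos_of_pos hT α
  have hH0 : 0 ≤ H := by
    have hmem : |(fun t => wTilde σ β b w t - wTilde σ β b₀ w t) T
        - (fun t => wTilde σ β b w t - wTilde σ β b₀ w t) 0| / |T - 0| ^ α
        ∈ {c : ℝ | ∃ s ∈ Set.Icc (0 : ℝ) T, ∃ t ∈ Set.Icc (0 : ℝ) T,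
          s ≠ t ∧ c = |(fun t => wTilde σ β b w t - wTilde σ β b₀ w t) t
            - (fun t => wTilde σ β b w t - wTilde σ β b₀ w t) s| / |t - s| ^ α} :=
      ⟨0, ⟨le_refl 0, hT.le⟩, T, ⟨hT.le, le_refl T⟩, hT.ne, rfl⟩
    have := le_csSup hbdd' hmem
    refine le_trans ?_ this
    positivity
  have hHol : ∀ u ∈ Icc (0:ℝ) T, ∀ v ∈ Icc (0:ℝ) T,
      |(wTilde σ β b w v - wTilde σ β b₀ w v) - (wTilde σ β b w u - wTilde σ β b₀ w u)|
        ≤ H * T ^ α := by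
    intro u hu v hv
    rcases eq_or_ne u v with rfl | hne
    · simp only [sub_self, abs_zero]
      positivity
    · have hmem : |(fun t => wTilde σ β b w t - wTilde σ β b₀ w t) v
          - (fun t => wTilde σ β b w t - wTilde σ β b₀ w t) u| / |v - u| ^ α
          ∈ {c : ℝ | ∃ s ∈ Set.Icc (0 : ℝ) T, ∃ t ∈ Set.Icc (0 : ℝ) T,
            s ≠ t ∧ c = |(fun t => wTilde σ β b w t - wTilde σ β b₀ w t) t
              - (fun t => wTilde σ β b w t - wTilde σ β b₀ w t) s| / |t - s| ^ α} :=
        ⟨u, hu, v, hv, hne, rfl⟩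
      have hle : |(wTilde σ β b w v - wTilde σ β b₀ w v)
          - (wTilde σ β b w u - wTilde σ β b₀ w u)| / |v - u| ^ α ≤ H :=
        le_csSup hbdd' hmem
      have hvu : (0:ℝ) < |v - u| := abs_pos.2 (sub_ne_zero.2 (Ne.symm hne))
      have hvuα : (0:ℝ) < |v - u| ^ α := Real.rpow_pos_of_pos hvu α
      have h1 : |(wTilde σ β b w v - wTilde σ β b₀ w v)
          - (wTilde σ β b w u - wTilde σ β b₀ w u)| ≤ H * |v - u| ^ α :=
        (div_le_iff₀ hvuα).1 hle
      have hvuT : |v - u| ≤ T := by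
        rw [abs_sub_le_iff]
        constructor <;> [linarith [hu.1, hv.2]; linarith [hv.1, hu.2]]
      have h2 : |v - u| ^ α ≤ T ^ α := Real.rpow_le_rpow (abs_nonneg _) hvuT hα0.le
      calc |(wTilde σ β b w v - wTilde σ β b₀ w v)
          - (wTilde σ β b w u - wTilde σ β b₀ w u)| ≤ H * |v - u| ^ α := h1
        _ ≤ H * T ^ α := mul_le_mul_of_nonneg_left h2 hH0
  -- initial values
  have hw0 : ∀ b' : ℝ, wTilde σ β b' w 0 = 0 := by intro b'; simp [wTilde]
  have hy0 : y 0 = x₀ ^ (1 - β) := by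
    have h := heq 0 ⟨le_refl 0, hT.le⟩
    simpa [hw0] using h
  have hy₀0 : y₀ 0 = x₀ ^ (1 - β) := by
    have h := heq₀ 0 ⟨le_refl 0, hT.le⟩
    simpa [hw0] using h
  -- interval subset helper
  have hsubI : ∀ u ∈ Icc (0:ℝ) T, ∀ v ∈ Icc (0:ℝ) T, Set.uIcc u v ⊆ Icc 0 T := by
    intro u hu v hv
    have := Set.uIcc_subset_uIcc (show u ∈ Set.uIcc (0:ℝ) T by rwa [Set.uIcc_of_le hT.le])
      (show v ∈ Set.uIcc (0:ℝ) T by rwa [Set.uIcc_of_le hT.le])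
    rwa [Set.uIcc_of_le hT.le] at this
  have hsplitF : ∀ u ∈ Icc (0:ℝ) T, ∀ v ∈ Icc (0:ℝ) T,
      (∫ s in (0:ℝ)..v, (y s) ^ (-γ) * Real.exp (b * s))
        - (∫ s in (0:ℝ)..u, (y s) ^ (-γ) * Real.exp (b * s))
        = ∫ s in u..v, (y s) ^ (-γ) * Real.exp (b * s) := by
    intro u hu v hv
    have h1 : IntervalIntegrable (fun s => (y s) ^ (-γ) * Real.exp (b * s))
        MeasureTheory.volume 0 u :=
      (hF.mono (hsubI 0 ⟨le_refl 0, hT.le⟩ u hu)).intervalIntegrable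
    have h2 : IntervalIntegrable (fun s => (y s) ^ (-γ) * Real.exp (b * s))
        MeasureTheory.volume u v :=
      (hF.mono (hsubI u hu v hv)).intervalIntegrable
    linarith [intervalIntegral.integral_add_adjacent_intervals h1 h2]
  have hsplitF₀ : ∀ u ∈ Icc (0:ℝ) T, ∀ v ∈ Icc (0:ℝ) T,
      (∫ s in (0:ℝ)..v, (y₀ s) ^ (-γ) * Real.exp (b₀ * s))
        - (∫ s in (0:ℝ)..u, (y₀ s) ^ (-γ) * Real.exp (b₀ * s))
        = ∫ s in u..v, (y₀ s) ^ (-γ) * Real.exp (b₀ * s) := by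
    intro u hu v hv
    have h1 : IntervalIntegrable (fun s => (y₀ s) ^ (-γ) * Real.exp (b₀ * s))
        MeasureTheory.volume 0 u :=
      (hF₀.mono (hsubI 0 ⟨le_refl 0, hT.le⟩ u hu)).intervalIntegrable
    have h2 : IntervalIntegrable (fun s => (y₀ s) ^ (-γ) * Real.exp (b₀ * s))
        MeasureTheory.volume u v :=
      (hF₀.mono (hsubI u hu v hv)).intervalIntegrable
    linarith [intervalIntegral.integral_add_adjacent_intervals h1 h2]
  intro t ht
  have hRHS0 : 0 ≤ (1 - β) * T * C * S + 2 * T ^ α * H := by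
    have h1 : 0 ≤ (1 - β) * T * C * S :=
      mul_nonneg (mul_nonneg (mul_nonneg h1β.le hT.le) hC0) hS0
    have h2 : 0 ≤ 2 * T ^ α * H := mul_nonneg (by positivity) hH0
    linarith
  have key : ∀ ε : ℝ, ε = 1 ∨ ε = -1 →
      ε * (y t - y₀ t) ≤ (1 - β) * T * C * S + 2 * T ^ α * H := by
    intro ε hε
    by_cases hp : ε * (y t - y₀ t) ≤ 0
    · exact hp.trans hRHS0
    push_neg at hp
    set A := {s : ℝ | s ∈ Icc 0 t ∧ ε * (y s - y₀ s) ≤ 0} with hAdef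
    have hec : ContinuousOn (fun s => ε * (y s - y₀ s)) (Icc 0 T) :=
      continuousOn_const.mul (hyc.sub hy₀c)
    have hIcc_t : Icc (0:ℝ) t ⊆ Icc 0 T := Icc_subset_Icc le_rfl ht.2
    have hAclosed : IsClosed A := by
      have hArw : A = Icc 0 t ∩ (fun s => ε * (y s - y₀ s)) ⁻¹' Iic 0 := by
        ext s; simp [hAdef, Set.mem_preimage]
      rw [hArw]
      exact (hec.mono hIcc_t).preimage_isClosed_of_isClosed isClosed_Icc isClosed_Iic
    have hAsub : A ⊆ Icc 0 t := fun s hs => hs.1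
    have hAcomp : IsCompact A := isCompact_Icc.of_isClosed_subset hAclosed hAsub
    have hA0 : (0:ℝ) ∈ A := by
      refine ⟨⟨le_refl 0, ht.1⟩, ?_⟩
      rw [hy0, hy₀0]; simp
    set t₀ := sSup A with ht₀def
    have ht₀A : t₀ ∈ A := hAcomp.sSup_mem ⟨0, hA0⟩
    have ht₀Icc : t₀ ∈ Icc 0 t := ht₀A.1
    have ht₀T : t₀ ∈ Icc (0:ℝ) T := ⟨ht₀Icc.1, le_trans ht₀Icc.2 ht.2⟩
    have hgt : ∀ s ∈ Ioc t₀ t, 0 < ε * (y s - y₀ s) := by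
      intro s hs
      by_contra h
      push_neg at h
      have hsA : s ∈ A := ⟨⟨le_trans ht₀Icc.1 hs.1.le, hs.2⟩, h⟩
      exact absurd (le_csSup hAcomp.bddAbove hsA) (not_le.2 hs.1)
    have ht₀lt : t₀ < t := by
      rcases lt_or_eq_of_le ht₀Icc.2 with h | h
      · exact h
      · exfalso; rw [h] at ht₀A; exact absurd ht₀A.2 (not_le.2 hp)
    have he₀ : ε * (y t₀ - y₀ t₀) = 0 := by
      have hivt := intermediate_value_Icc ht₀Icc.2
        (hec.mono (Icc_subset_Icc ht₀Icc.1 ht.2))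
      have h0mem : (0:ℝ) ∈ Icc (ε * (y t₀ - y₀ t₀)) (ε * (y t - y₀ t)) := ⟨ht₀A.2, hp.le⟩
      rcases hivt h0mem with ⟨s, hs, hs0⟩
      rcases eq_or_lt_of_le hs.1 with heqs | hlt
      · rw [← heqs] at hs0; exact hs0
      · exact absurd hs0 (ne_of_gt (hgt s ⟨hlt, hs.2⟩))
    -- pointwise bound on the drift
    have hpt : ∀ s ∈ Icc t₀ t,
        ε * a * ((y s) ^ (-γ) * Real.exp (b * s))
          - ε * a₀ * ((y₀ s) ^ (-γ) * Real.exp (b₀ * s)) ≤ S * C := by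
      intro s hs
      have hsT : s ∈ Icc (0:ℝ) T := ⟨le_trans ht₀Icc.1 hs.1, le_trans hs.2 ht.2⟩
      have hes : 0 ≤ ε * (y s - y₀ s) := by
        rcases eq_or_lt_of_le hs.1 with heqs | hlt
        · rw [← heqs]; exact he₀.ge
        · exact (hgt s ⟨hlt, hs.2⟩).le
      have hyy : ε * ((y s) ^ (-γ) - (y₀ s) ^ (-γ)) ≤ 0 := by
        rcases hε with rfl | rfl
        · have hle : y₀ s ≤ y s := by nlinarith
          have := Real.rpow_le_rpow_of_nonpos (hy₀pos s hsT) hle (neg_nonpos.2 hγ0.le)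
          nlinarith
        · have hle : y s ≤ y₀ s := by nlinarith
          have := Real.rpow_le_rpow_of_nonpos (hypos s hsT) hle (neg_nonpos.2 hγ0.le)
          nlinarith
      have h2 : ε * (a * Real.exp (b*s) - a₀ * Real.exp (b₀*s))
          ≤ |a * Real.exp (b*s) - a₀ * Real.exp (b₀*s)| := by
        rcases hε with rfl | rfl
        · rw [one_mul]; exact le_abs_self _
        · rw [neg_one_mul]; exact neg_le_abs _
      have hy₀γnn : 0 ≤ (y₀ s) ^ (-γ) := Real.rpow_nonneg (hy₀pos s hsT).le _
      have h3 : (y₀ s) ^ (-γ) * (ε * (a * Real.exp (b*s) - a₀ * Real.exp (b₀*s))) ≤ S * C := by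
        calc (y₀ s) ^ (-γ) * (ε * (a * Real.exp (b*s) - a₀ * Real.exp (b₀*s)))
            ≤ (y₀ s) ^ (-γ) * C :=
              mul_le_mul_of_nonneg_left (h2.trans (hC s hsT)) hy₀γnn
          _ ≤ S * C := mul_le_mul_of_nonneg_right (hS s hsT) hC0
      have h4 : a * Real.exp (b*s) * (ε * ((y s) ^ (-γ) - (y₀ s) ^ (-γ))) ≤ 0 :=
        mul_nonpos_of_nonneg_of_nonpos (by positivity) hyy
      have hid : ε * a * ((y s) ^ (-γ) * Real.exp (b * s))
          - ε * a₀ * ((y₀ s) ^ (-γ) * Real.exp (b₀ * s))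
          = a * Real.exp (b*s) * (ε * ((y s) ^ (-γ) - (y₀ s) ^ (-γ)))
            + (y₀ s) ^ (-γ) * (ε * (a * Real.exp (b*s) - a₀ * Real.exp (b₀*s))) := by ring
      rw [hid]; linarith
    -- integrability
    have hintF : IntervalIntegrable (fun s => (y s) ^ (-γ) * Real.exp (b * s))
        MeasureTheory.volume t₀ t := (hF.mono (hsubI t₀ ht₀T t ht)).intervalIntegrable
    have hintF₀ : IntervalIntegrable (fun s => (y₀ s) ^ (-γ) * Real.exp (b₀ * s))
        MeasureTheory.volume t₀ t := (hF₀.mono (hsubI t₀ ht₀T t ht)).intervalIntegrable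
    have hintg : IntervalIntegrable
        (fun s => ε * a * ((y s) ^ (-γ) * Real.exp (b * s))
          - ε * a₀ * ((y₀ s) ^ (-γ) * Real.exp (b₀ * s))) MeasureTheory.volume t₀ t :=
      (hintF.const_mul _).sub (hintF₀.const_mul _)
    have hmono := intervalIntegral.integral_mono_on ht₀Icc.2 hintg
      (intervalIntegrable_const) hpt
    rw [intervalIntegral.integral_const, smul_eq_mul] at hmono
    have hgsplit : (∫ s in t₀..t, (ε * a * ((y s) ^ (-γ) * Real.exp (b * s))
          - ε * a₀ * ((y₀ s) ^ (-γ) * Real.exp (b₀ * s))))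
        = ε * a * (∫ s in t₀..t, (y s) ^ (-γ) * Real.exp (b * s))
          - ε * a₀ * (∫ s in t₀..t, (y₀ s) ^ (-γ) * Real.exp (b₀ * s)) := by
      rw [intervalIntegral.integral_sub (hintF.const_mul _) (hintF₀.const_mul _),
        intervalIntegral.integral_const_mul, intervalIntegral.integral_const_mul]
    have hId : ε * (y t - y₀ t) - ε * (y t₀ - y₀ t₀)
        = (1 - β) * (ε * a * (∫ s in t₀..t, (y s) ^ (-γ) * Real.exp (b * s))
            - ε * a₀ * (∫ s in t₀..t, (y₀ s) ^ (-γ) * Real.exp (b₀ * s)))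
          + ε * ((wTilde σ β b w t - wTilde σ β b₀ w t)
            - (wTilde σ β b w t₀ - wTilde σ β b₀ w t₀)) := by
      have h1 := heq t ht
      have h2 := heq t₀ ht₀T
      have h1' := heq₀ t ht
      have h2' := heq₀ t₀ ht₀T
      have h3 := hsplitF t₀ ht₀T t ht
      have h3' := hsplitF₀ t₀ ht₀T t ht
      linear_combination ε * h1 - ε * h1' - ε * h2 + ε * h2'
        + ε * a * (1 - β) * h3 - ε * a₀ * (1 - β) * h3'
    have hΔ := hHol t₀ ht₀T t ht
    have hεΔ : ε * ((wTilde σ β b w t - wTilde σ β b₀ w t)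
        - (wTilde σ β b w t₀ - wTilde σ β b₀ w t₀)) ≤ H * T ^ α := by
      refine le_trans ?_ hΔ
      rcases hε with rfl | rfl
      · rw [one_mul]; exact le_abs_self _
      · rw [neg_one_mul]; exact neg_le_abs _
    have hdrift : (1 - β) * (ε * a * (∫ s in t₀..t, (y s) ^ (-γ) * Real.exp (b * s))
          - ε * a₀ * (∫ s in t₀..t, (y₀ s) ^ (-γ) * Real.exp (b₀ * s)))
        ≤ (1 - β) * ((t - t₀) * (S * C)) := by
      rw [← hgsplit]
      exact mul_le_mul_of_nonneg_left hmono h1β.le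
    have hSC0 : 0 ≤ S * C := mul_nonneg hS0 hC0
    have hstep : (1 - β) * ((t - t₀) * (S * C)) ≤ (1 - β) * (T * (S * C)) := by
      have : (t - t₀) * (S * C) ≤ T * (S * C) := by
        apply mul_le_mul_of_nonneg_right _ hSC0
        linarith [ht₀Icc.1, ht.2]
      exact mul_le_mul_of_nonneg_left this h1β.le
    have hfin : ε * (y t - y₀ t) ≤ (1 - β) * (T * (S * C)) + H * T ^ α := by
      linarith [hId, hdrift, hstep, hεΔ, he₀]
    have hrw : (1 - β) * (T * (S * C)) = (1 - β) * T * C * S := by ring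
    rw [hrw] at hfin
    have hHT : 0 ≤ H * T ^ α := mul_nonneg hH0 hTα.le
    linarith [hfin, hHT]
  rcases abs_cases (y t - y₀ t) with ⟨habs, _⟩ | ⟨habs, _⟩
  · rw [habs]
    have := key 1 (Or.inl rfl)
    linarith
  · rw [habs]
    have := key (-1) (Or.inr rfl)
    linarith
end
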